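/- arXiv:2407.19665 — 9 statements merged into one kernel-verified Lean document; each statement's English description precedes it below -/
import Mathlib

section
/- Let A ∈ M_n(ℤ) with characteristic polynomial f(x) = x^n − c_{n−1}x^{n−1} − ⋯ − c_0, and suppose no root of f is a root of unity and that p is an odd prime with gcd(p, c_0) = 1. Let {u_k} be the linear recurrence u_{m+n} = c_{n−1}u_{m+n−1} + ⋯ + c_0 u_m with initial values u_0 = ⋯ = u_{n−2} = 0, u_{n−1} = 1, and let T_r denote the period of the sequence {u_k mod p^r}. Then there exists t ∈ ℕ such that T_1 = T_2 = ⋯ = T_t and T_k = p^{k−t} T_1 for all k > t. -/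
/-!
Let `C` be the companion matrix of the recurrence, so that `C ^ k` shifts windows of `u` by `k`.
The Hankel matrix `(u (i + j))` is unimodular because of the initial values, hence `u` has
period `k` modulo `q` exactly when `C ^ k ≡ 1 (mod q)`: `T r` is the order of `C` modulo `p ^ r`.

If `X ≡ 1 (mod p ^ r)` with `r ≥ 1` and `p` odd, the binomial theorem gives
`X ^ p - 1 ≡ p (X - 1) (mod p ^ (r + 2))`. Consequently `T (r + 1)` is `T r` or `p * T r`, and
once the order jumps it jumps at every later step. It cannot stay constant forever: then
`C ^ T 1 = 1` over `ℤ`, and applying this to the geometric solution `z ^ m` for a root `z` of `f`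
would make `z` a root of unity. (If `u` is not purely periodic modulo `p`, every `T r` is
`sInf ∅ = 0` and the claim holds trivially.)
-/

open Polynomial

def Matrix.hankel {R : Type*} (n : ℕ) (u : ℕ → R) : Matrix (Fin n) (Fin n) R :=
  Matrix.of fun i j => u (i + j)

theorem Matrix.isUnit_hankel {R : Type*} [CommRing R] {n : ℕ} {u : ℕ → R}
    (h0 : ∀ i, i < n - 1 → u i = 0) (h1 : u (n - 1) = 1) : IsUnit (hankel n u) := by
  rw [isUnit_iff_isUnit_det]
  have htri : ((hankel n u).submatrix Fin.revPerm id).IsUpperTriangular := by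
    intro i j hij
    simp only [hankel, submatrix_apply, id, of_apply, Fin.revPerm_apply, Fin.val_rev] at hij ⊢
    exact h0 _ (by omega)
  have hdet : ((hankel n u).submatrix Fin.revPerm id).det = 1 := by
    rw [det_of_isUpperTriangular htri]
    refine Finset.prod_eq_one fun i _ => ?_
    simp only [hankel, submatrix_apply, id, of_apply, Fin.revPerm_apply, Fin.val_rev]
    rw [← h1]
    congr 1
    omega
  rw [det_permute] at hdet
  exact IsUnit.of_mul_eq_one_right _ hdet

namespace LinearRecurrence

open Matrix

variable {R S : Type*} [CommRing R] [CommRing S] (E : LinearRecurrence R)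

def map (f : R →+* S) : LinearRecurrence S := ⟨E.order, fun i => f (E.coeffs i)⟩

@[simp]
theorem map_order (f : R →+* S) : (E.map f).order = E.order := rfl

theorem charPoly_map (f : R →+* S) : (E.map f).charPoly = E.charPoly.map f := by
  simp only [charPoly, Polynomial.map_sub, Polynomial.map_sum, Polynomial.map_monomial, map_one]
  rfl

def companion : Matrix (Fin E.order) (Fin E.order) R := LinearMap.toMatrix' E.tupleSucc

theorem companion_apply (i j : Fin E.order) :
    E.companion i j = if (i : ℕ) + 1 < E.order then (if (i : ℕ) + 1 = j then 1 else 0)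
      else E.coeffs j := by
  simp only [companion, LinearMap.toMatrix'_apply, tupleSucc, LinearMap.coe_mk, AddHom.coe_mk]
  by_cases h : (i : ℕ) + 1 < E.order
  · simp [h, Pi.single_apply, Fin.ext_iff, eq_comm]
  · simp [h, Pi.single_apply]

theorem companion_map (f : R →+* S) : (E.map f).companion = f.mapMatrix E.companion := by
  refine Matrix.ext fun (i j : Fin E.order) => ?_
  rw [companion_apply (E.map f) i j, RingHom.mapMatrix_apply, Matrix.map_apply, companion_apply,
    apply_ite f, apply_ite f, map_one, map_zero]
  rfl

variable {E} {u : ℕ → R} {k : ℕ}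

theorem IsSolution.map (f : R →+* S) (hu : E.IsSolution u) :
    (E.map f).IsSolution fun m => f (u m) := fun m => by
  change f (u (m + E.order)) = ∑ i, f (E.coeffs i) * f (u (m + i))
  simp only [hu m, map_sum, map_mul]

theorem IsSolution.shift (hu : E.IsSolution u) (k : ℕ) : E.IsSolution fun m => u (m + k) :=
  fun m => by simpa only [add_right_comm] using hu (m + k)

theorem IsSolution.tupleSucc_shift (hu : E.IsSolution u) (m : ℕ) :
    E.tupleSucc (fun i => u (i + m)) = fun i : Fin E.order => u (i + m + 1) := by
  ext i
  simp only [tupleSucc, LinearMap.coe_mk, AddHom.coe_mk]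
  split_ifs with h
  · simp only [add_right_comm]
  · rw [show (i : ℕ) + m + 1 = m + E.order by omega, hu m]
    simp only [add_comm]

theorem IsSolution.companion_mul_hankel (hu : E.IsSolution u) :
    E.companion * hankel E.order u = hankel E.order fun m => u (m + 1) := by
  ext i j
  have := congrFun (hu.tupleSucc_shift j) i
  rw [← LinearMap.toMatrix'_mulVec] at this
  simpa [hankel, Matrix.mul_apply, Matrix.mulVec, dotProduct, companion, add_right_comm] using this

theorem IsSolution.companion_pow_mul_hankel (hu : E.IsSolution u) (k : ℕ) :
    E.companion ^ k * hankel E.order u = hankel E.order fun m => u (m + k) := by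
  induction k generalizing u with
  | zero => simp
  | succ k ih =>
    rw [pow_succ, mul_assoc, hu.companion_mul_hankel, ih (hu.shift 1)]
    simp only [add_assoc]

theorem IsSolution.add_eq_of_companion_pow_eq_one (hE : 0 < E.order) (hu : E.IsSolution u)
    (h : E.companion ^ k = 1) (m : ℕ) : u (m + k) = u m := by
  have := (hu.shift m).companion_pow_mul_hankel k
  rw [h, one_mul] at this
  simpa [hankel, add_comm k m] using (congrFun (congrFun this ⟨0, hE⟩) ⟨0, hE⟩).symm

theorem IsSolution.companion_pow_eq_one_iff (hE : 0 < E.order) (hu : E.IsSolution u)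
    (h0 : ∀ i, i < E.order - 1 → u i = 0) (h1 : u (E.order - 1) = 1) :
    E.companion ^ k = 1 ↔ ∀ m, u (m + k) = u m := by
  refine ⟨hu.add_eq_of_companion_pow_eq_one hE, fun hper => ?_⟩
  have := hu.companion_pow_mul_hankel k
  simp only [hper] at this
  exact (isUnit_hankel h0 h1).mul_right_cancel (this.trans (one_mul _).symm)

theorem pow_eq_one_of_companion_pow_eq_one (hE : 0 < E.order) (f : R →+* S)
    (h : E.companion ^ k = 1) {z : S} (hz : (E.map f).charPoly.IsRoot z) : z ^ k = 1 := by
  have hC : (E.map f).companion ^ k = 1 := by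
    have := congrArg f.mapMatrix h
    rwa [map_pow, map_one, ← companion_map] at this
  simpa using (((E.map f).geom_sol_iff_root_charPoly z).2 hz).add_eq_of_companion_pow_eq_one
    (E := E.map f) hE hC 0

end LinearRecurrence

section Lifting

variable {R : Type*} [Ring R] {p r : ℕ} {x : R}

theorem exists_one_add_prime_pow_mul_pow_prime_eq (hp : p.Prime) (hodd : Odd p) (hr : r ≠ 0)
    (x : R) : ∃ y : R, (1 + (p : R) ^ r * x) ^ p = 1 + (p : R) ^ (r + 1) * (x + p * y) := by
  have h3 : 3 ≤ p := by obtain ⟨w, rfl⟩ := hodd; have := hp.two_le; omega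
  -- the commutative case, applied in `ℤ[X]` and evaluated at `x`
  obtain ⟨y, hy⟩ := ZMod.exists_one_add_mul_pow_prime_eq (u := (p : ℤ[X]) ^ r) (v := p) hp
    (dvd_pow_self _ hr) (by
      rw [← pow_succ', ← pow_succ, ← pow_mul]
      exact pow_dvd_pow _ (by nlinarith [Nat.one_le_iff_ne_zero.2 hr])) X
  refine ⟨aeval x y, ?_⟩
  simpa [pow_succ', mul_assoc] using congrArg (aeval x) hy

theorem pow_succ_dvd_pow_prime_sub_one (hp : p.Prime) (hodd : Odd p) (hr : r ≠ 0)
    (h : (p : R) ^ r ∣ x - 1) : (p : R) ^ (r + 1) ∣ x ^ p - 1 := by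
  obtain ⟨d, hd⟩ := h
  obtain ⟨y, hy⟩ := exists_one_add_prime_pow_mul_pow_prime_eq hp hodd hr d
  rw [sub_eq_iff_eq_add'.1 hd, hy, add_sub_cancel_left]
  exact dvd_mul_right _ _

theorem pow_succ_dvd_sub_one_of_pow_add_two_dvd (hp : p.Prime) (hodd : Odd p) (hr : r ≠ 0)
    (hreg : IsLeftRegular (p : R)) (h : (p : R) ^ r ∣ x - 1)
    (h2 : (p : R) ^ (r + 2) ∣ x ^ p - 1) : (p : R) ^ (r + 1) ∣ x - 1 := by
  obtain ⟨d, hd⟩ := h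
  obtain ⟨y, hy⟩ := exists_one_add_prime_pow_mul_pow_prime_eq hp hodd hr d
  obtain ⟨e, he⟩ := h2
  rw [sub_eq_iff_eq_add'.1 hd, hy, add_sub_cancel_left, pow_succ _ (r + 1), mul_assoc] at he
  have hde : d = p * (e - y) := by
    rw [mul_sub, ← hreg.pow (r + 1) he]
    noncomm_ring
  rw [hd, hde, pow_succ, ← mul_assoc]
  exact dvd_mul_right _ _

end Lifting

theorem Nat.Prime.eq_or_eq_mul_of_dvd_of_dvd_mul {a b p : ℕ} (hp : p.Prime) (hab : a ∣ b)
    (hb : b ∣ p * a) : b = a ∨ b = p * a := by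
  obtain ⟨d, rfl⟩ := hab
  rcases Nat.eq_zero_or_pos a with rfl | ha
  · simp
  rw [mul_comm p] at hb
  rcases hp.eq_one_or_self_of_dvd d (Nat.dvd_of_mul_dvd_mul_left ha hb) with rfl | rfl
  · simp
  · exact Or.inr (mul_comm _ _)

theorem orderOf_eq_sInf {M : Type*} [Monoid M] (x : M) :
    orderOf x = sInf {k | 0 < k ∧ x ^ k = 1} := by
  simp only [orderOf, Function.minimalPeriod_eq_sInf_n_pos_IsPeriodicPt,
    isPeriodicPt_mul_iff_pow_eq_one]

namespace Matrix

variable {ι : Type*} [Fintype ι] [DecidableEq ι] {p r k : ℕ}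

theorem natCast_dvd_iff {q : ℕ} {W : Matrix ι ι ℤ} :
    (q : Matrix ι ι ℤ) ∣ W ↔ ∀ i j, (q : ℤ) ∣ W i j := by
  simp only [Dvd.dvd, ← nsmul_eq_mul]
  constructor
  · rintro ⟨D, rfl⟩ i j
    exact ⟨D i j, by simp⟩
  · intro h
    choose D hD using h
    exact ⟨of D, by ext i j; simp [hD]⟩

theorem isLeftRegular_natCast {q : ℕ} (hq : q ≠ 0) : IsLeftRegular (q : Matrix ι ι ℤ) := by
  intro A B h
  ext i j
  have hij := congrFun (congrFun h i) j
  simp only [← nsmul_eq_mul, smul_apply] at hij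
  exact nsmul_right_injective hq hij

theorem eq_zero_of_forall_pow_dvd (hp : 1 < p) {W : Matrix ι ι ℤ}
    (h : ∀ r, (p : Matrix ι ι ℤ) ^ r ∣ W) : W = 0 := by
  ext i j
  have hdvd := natCast_dvd_iff.1 (by exact_mod_cast h (W i j).natAbs) i j
  exact Int.eq_zero_of_dvd_of_natAbs_lt_natAbs hdvd (by simpa using Nat.lt_pow_self hp)

noncomputable def orderMod (q : ℕ) (X : Matrix ι ι ℤ) : ℕ :=
  orderOf ((Int.castRingHom (ZMod q)).mapMatrix X)

variable (X : Matrix ι ι ℤ)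

theorem orderMod_dvd_iff {q : ℕ} : orderMod q X ∣ k ↔ (q : Matrix ι ι ℤ) ∣ X ^ k - 1 := by
  rw [orderMod, orderOf_dvd_iff_pow_eq_one, ← map_pow, ← sub_eq_zero,
    ← map_one (Int.castRingHom (ZMod q)).mapMatrix, ← map_sub, natCast_dvd_iff, ← Matrix.ext_iff]
  simp only [RingHom.mapMatrix_apply, map_apply, zero_apply, eq_intCast,
    ZMod.intCast_zmod_eq_zero_iff_dvd]

theorem orderMod_prime_pow_dvd_iff :
    orderMod (p ^ r) X ∣ k ↔ (p : Matrix ι ι ℤ) ^ r ∣ X ^ k - 1 := by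
  rw [orderMod_dvd_iff, Nat.cast_pow]

theorem pow_eq_one_of_forall_orderMod_dvd (hp : 1 < p)
    (h : ∀ r, 1 ≤ r → orderMod (p ^ r) X ∣ k) : X ^ k = 1 := by
  refine sub_eq_zero.1 (eq_zero_of_forall_pow_dvd hp fun r => ?_)
  rcases Nat.eq_zero_or_pos r with rfl | hr
  · rw [pow_zero]
    exact one_dvd _
  · exact (orderMod_prime_pow_dvd_iff X).1 (h r hr)

theorem orderMod_pow_dvd_orderMod_pow_succ : orderMod (p ^ r) X ∣ orderMod (p ^ (r + 1)) X :=
  (orderMod_prime_pow_dvd_iff X).2 <|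
    (pow_dvd_pow _ r.le_succ).trans ((orderMod_prime_pow_dvd_iff X).1 dvd_rfl)

theorem orderMod_pow_succ_eq_or (hp : p.Prime) (hodd : Odd p) (hr : r ≠ 0) :
    orderMod (p ^ (r + 1)) X = orderMod (p ^ r) X ∨
      orderMod (p ^ (r + 1)) X = p * orderMod (p ^ r) X := by
  refine hp.eq_or_eq_mul_of_dvd_of_dvd_mul (orderMod_pow_dvd_orderMod_pow_succ X) ?_
  rw [orderMod_prime_pow_dvd_iff, mul_comm, pow_mul]
  exact pow_succ_dvd_pow_prime_sub_one hp hodd hr ((orderMod_prime_pow_dvd_iff X).1 dvd_rfl)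

theorem orderMod_pow_add_two_ne (hp : p.Prime) (hodd : Odd p) (hr : r ≠ 0)
    (h : orderMod (p ^ (r + 1)) X ≠ orderMod (p ^ r) X) :
    orderMod (p ^ (r + 2)) X ≠ orderMod (p ^ (r + 1)) X := by
  intro h2
  have hsucc := (orderMod_pow_succ_eq_or X hp hodd hr).resolve_left h
  refine h (Nat.dvd_antisymm ?_ (orderMod_pow_dvd_orderMod_pow_succ X))
  rw [orderMod_prime_pow_dvd_iff]
  refine pow_succ_dvd_sub_one_of_pow_add_two_dvd hp hodd hr (isLeftRegular_natCast hp.ne_zero)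
    ((orderMod_prime_pow_dvd_iff X).1 dvd_rfl) ?_
  rw [← pow_mul, mul_comm, ← hsucc, ← h2]
  exact (orderMod_prime_pow_dvd_iff X).1 dvd_rfl

end Matrix

theorem LinearRecurrence.IsSolution.sInf_periods_zmod_eq_orderMod {E : LinearRecurrence ℤ}
    {u : ℕ → ℤ} (hE : 0 < E.order) (hu : E.IsSolution u) (h0 : ∀ i, i < E.order - 1 → u i = 0)
    (h1 : u (E.order - 1) = 1) (q : ℕ) :
    sInf {k | 0 < k ∧ ∀ m, (u (m + k) : ZMod q) = u m} = Matrix.orderMod q E.companion := by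
  rw [Matrix.orderMod, orderOf_eq_sInf]
  congr with k
  refine and_congr_right fun _ => ?_
  have := (hu.map (Int.castRingHom (ZMod q))).companion_pow_eq_one_iff (R := ZMod q) (k := k) hE
    (fun i hi => by simp [h0 i (by simpa using hi)]) (by simp [h1])
  rw [E.companion_map] at this
  exact this.symm

theorem exists_const_then_geometric {a : ℕ → ℕ} {p : ℕ}
    (hstep : ∀ r, 1 ≤ r → a (r + 1) = a r ∨ a (r + 1) = p * a r)
    (hjump : ∀ r, 1 ≤ r → a (r + 1) ≠ a r → a (r + 2) ≠ a (r + 1))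
    (hconst : (∀ r, 1 ≤ r → a r = a 1) → a 1 = 0) :
    ∃ t, 0 < t ∧ (∀ r, 1 ≤ r → r ≤ t → a r = a 1) ∧ ∀ k, t < k → a k = p ^ (k - t) * a 1 := by
  have hflat : ∀ s, (∀ r, 1 ≤ r → r < s → a (r + 1) = a r) →
      ∀ r, 1 ≤ r → r ≤ s → a r = a 1 := by
    intro s hs r hr hrs
    induction r, hr using Nat.le_induction with
    | base => rfl
    | succ r hr ih => rw [hs r hr (by omega), ih (by omega)]
  by_cases hex : ∃ r, 1 ≤ r ∧ a (r + 1) ≠ a r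
  · set t := Nat.find hex
    have ht : 1 ≤ t ∧ a (t + 1) ≠ a t := Nat.find_spec hex
    have hflat_t := hflat t fun r hr hrt => not_not.1 fun hne => Nat.find_min hex hrt ⟨hr, hne⟩
    have hgrow : ∀ k, t ≤ k → a (k + 1) ≠ a k ∧ a (k + 1) = p ^ (k + 1 - t) * a 1 := by
      intro k hk
      induction k, hk using Nat.le_induction with
      | base =>
        refine ⟨ht.2, ?_⟩
        rw [(hstep t ht.1).resolve_left ht.2, hflat_t t ht.1 le_rfl, Nat.add_sub_cancel_left,
          pow_one]
      | succ k hk ih =>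
        have hne := hjump k (by omega) ih.1
        refine ⟨hne, ?_⟩
        rw [(hstep (k + 1) (by omega)).resolve_left hne, ih.2,
          show k + 1 + 1 - t = k + 1 - t + 1 by omega, pow_succ']
        ring
    refine ⟨t, ht.1, hflat_t, fun k hk => ?_⟩
    obtain ⟨j, rfl⟩ : ∃ j, k = j + 1 := ⟨k - 1, by omega⟩
    exact (hgrow j (by omega)).2
  · push Not at hex
    have hall : ∀ r, 1 ≤ r → a r = a 1 := fun r hr => hflat r (fun s hs _ => hex s hs) r hr le_rfl
    refine ⟨1, one_pos, fun r hr _ => hall r hr, fun k hk => ?_⟩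
    rw [hall k (by omega), hconst hall, mul_zero]

theorem stmt_6_general (n : ℕ) (hn : 0 < n) (A : Matrix (Fin n) (Fin n) ℤ)
    (c : Fin n → ℤ)
    (hchar : A.charpoly = X ^ n - ∑ i : Fin n, C (c i) * X ^ (i : ℕ))
    (hroots : ∀ z : ℂ, (A.charpoly.map (Int.castRingHom ℂ)).IsRoot z →
      ∀ m : ℕ, 0 < m → z ^ m ≠ 1)
    (p : ℕ) (hp : p.Prime) (hodd : Odd p)
    (u : ℕ → ℤ)
    (hrec : ∀ m : ℕ, u (m + n) = ∑ i : Fin n, c i * u (m + i))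
    (hinit : (∀ i : ℕ, i < n - 1 → u i = 0) ∧ u (n - 1) = 1)
    (T : ℕ → ℕ)
    (hT : ∀ r : ℕ, 1 ≤ r →
      T r = sInf {k : ℕ | 0 < k ∧ ∀ m : ℕ, ((u (m + k) : ZMod (p ^ r)) = (u m : ZMod (p ^ r)))}) :
    ∃ t : ℕ, 0 < t ∧ (∀ r : ℕ, 1 ≤ r → r ≤ t → T r = T 1) ∧
      ∀ k : ℕ, t < k → T k = p ^ (k - t) * T 1 := by
  let E : LinearRecurrence ℤ := ⟨n, c⟩
  have hu : E.IsSolution u := hrec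
  have hTE : ∀ r, 1 ≤ r → T r = E.companion.orderMod (p ^ r) := fun r hr => by
    rw [hT r hr, hu.sInf_periods_zmod_eq_orderMod hn hinit.1 hinit.2]
  have hcharE : A.charpoly = E.charPoly := by
    simp only [hchar, LinearRecurrence.charPoly, E, ← C_mul_X_pow_eq_monomial, C_1, one_mul]
  have hperiod : ∀ k, E.companion ^ k = 1 → k = 0 := by
    intro k hk
    obtain ⟨z, hz⟩ := Complex.exists_root (f := (E.map (Int.castRingHom ℂ)).charPoly) (by
      rw [LinearRecurrence.charPoly_degree_eq_order]
      exact_mod_cast hn)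
    by_contra hk0
    refine hroots z ?_ k (Nat.pos_of_ne_zero hk0)
      (LinearRecurrence.pow_eq_one_of_companion_pow_eq_one hn _ hk hz)
    rwa [hcharE, ← E.charPoly_map]
  obtain ⟨t, ht, hflat, hgeom⟩ := exists_const_then_geometric
    (a := fun r => E.companion.orderMod (p ^ r))
    (fun r hr => E.companion.orderMod_pow_succ_eq_or hp hodd (by omega))
    (fun r hr => E.companion.orderMod_pow_add_two_ne hp hodd (by omega))
    (fun h => hperiod _ (E.companion.pow_eq_one_of_forall_orderMod_dvd hp.one_lt
      fun r hr => (h r hr).dvd))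
  refine ⟨t, ht, fun r hr hrt => ?_, fun k hk => ?_⟩
  · rw [hTE r hr, hTE 1 le_rfl, hflat r hr hrt]
  · rw [hTE k (by omega), hTE 1 le_rfl, hgeom k hk]

/-- Let `A ∈ M_n(ℤ)` have characteristic polynomial
`f(x) = x^n - c_{n-1}x^{n-1} - ⋯ - c_0`, no root of which (in `ℂ`) is a root
of unity, and let `p` be an odd prime not dividing `c_0`. Let `u` be the linear
recurrence induced by `A` with initial values `0, …, 0, 1`, and let `T r` be
the minimal period of `u mod p^r`. Then there is `t` with
`T 1 = T 2 = ⋯ = T t` and `T k = p^(k-t) * T 1` for all `k > t`. -/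
theorem stmt_6 (n : ℕ) (hn : 0 < n) (A : Matrix (Fin n) (Fin n) ℤ)
    (c : Fin n → ℤ)
    (hchar : A.charpoly = X ^ n - ∑ i : Fin n, C (c i) * X ^ (i : ℕ))
    (hroots : ∀ z : ℂ, (A.charpoly.map (Int.castRingHom ℂ)).IsRoot z →
      ∀ m : ℕ, 0 < m → z ^ m ≠ 1)
    (p : ℕ) (hp : p.Prime) (hodd : Odd p) (hpc : ¬(p : ℤ) ∣ c ⟨0, hn⟩)
    (u : ℕ → ℤ)
    (hrec : ∀ m : ℕ, u (m + n) = ∑ i : Fin n, c i * u (m + i))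
    (hinit : (∀ i : ℕ, i < n - 1 → u i = 0) ∧ u (n - 1) = 1)
    (T : ℕ → ℕ)
    (hT : ∀ r : ℕ, 1 ≤ r →
      T r = sInf {k : ℕ | 0 < k ∧ ∀ m : ℕ, ((u (m + k) : ZMod (p ^ r)) = (u m : ZMod (p ^ r)))}) :
    ∃ t : ℕ, 0 < t ∧ (∀ r : ℕ, 1 ≤ r → r ≤ t → T r = T 1) ∧
      ∀ k : ℕ, t < k → T k = p ^ (k - t) * T 1 :=
  stmt_6_general n hn A c hchar hroots p hp hodd u hrec hinit T hT
end

section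
/- Let f(x) ∈ ℤ[x] be monic of degree n, p a prime, m ≥ 1, and suppose x^k ≡ 1 + p^m s(x) mod f(x) in ℤ[x], where s is an integer polynomial of degree < n not all of whose coefficients are divisible by p. Then x^{pk} ≡ 1 + p^{m+1} l(x) mod f(x) for some integer polynomial l of degree < n not all of whose coefficients are divisible by p (assuming p is odd). -/
/-!
Raise `X ^ k = 1 + p ^ m s` to the `p`-th power. Since `p` is odd and `m ≥ 1`, the geometric sum
`∑ (1 + p ^ m s) ^ i` is `p` modulo `p ^ 2`, so `(1 + p ^ m s) ^ p = 1 + p ^ (m + 1) (s + p b)`.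
Reducing `s + p b` modulo the monic `f` gives `l`; modulo `p` this reduction is the reduction of
`s`, which is `s` itself because `deg s < deg f`, so `l` does not vanish modulo `p`.
-/

open Polynomial

theorem exists_one_add_pow_mul_pow_eq {R : Type*} [CommRing R] {p m : ℕ} (hp : Odd p) (hm : 0 < m)
    (a : R) : ∃ b : R, (1 + (p : R) ^ m * a) ^ p = 1 + (p : R) ^ (m + 1) * (a + p * b) := by
  have hpm : (p : R) ^ m = p * p ^ (m - 1) := by rw [← pow_succ', Nat.sub_add_cancel hm]
  obtain ⟨c, hc⟩ := odd_sq_dvd_geom_sum₂_sub (1 : R) ((p : R) ^ (m - 1) * a) hp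
  rw [← mul_assoc, ← hpm] at hc
  refine ⟨c * a, ?_⟩
  linear_combination (p : R) ^ m * a * hc - geom_sum₂_mul (1 + (p : R) ^ m * a) 1 p

theorem Polynomial.map_intCastRingHom_ne_zero_iff {p : ℕ} {g : ℤ[X]} :
    g.map (Int.castRingHom (ZMod p)) ≠ 0 ↔ ∃ i, ¬(p : ℤ) ∣ g.coeff i := by
  simp [Ne, Polynomial.ext_iff, ZMod.intCast_zmod_eq_zero_iff_dvd]

theorem Polynomial.exists_not_dvd_coeff_add_mul_modByMonic {p : ℕ} {f s : ℤ[X]} (hf : f.Monic)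
    (hs : s.degree < f.degree) (hsp : ∃ i, ¬(p : ℤ) ∣ s.coeff i) (b : ℤ[X]) :
    ∃ i, ¬(p : ℤ) ∣ ((s + (p : ℤ[X]) * b) %ₘ f).coeff i := by
  rw [← map_intCastRingHom_ne_zero_iff] at hsp ⊢
  set φ := Int.castRingHom (ZMod p)
  have : Nontrivial (ZMod p) :=
    ZMod.nontrivial_iff.2 fun hp ↦ by subst hp; exact hsp (Subsingleton.elim _ _)
  have hs' : (s.map φ).degree < (f.map φ).degree := by
    rw [hf.degree_map]
    exact degree_map_le.trans_lt hs
  rwa [map_modByMonic _ hf, Polynomial.map_add, Polynomial.map_mul, Polynomial.map_natCast,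
    CharP.cast_eq_zero, zero_mul, add_zero, (modByMonic_eq_self_iff (hf.map _)).2 hs']

theorem AdjoinRoot.mk_eq_mk_iff_exists {R : Type*} [CommRing R] {f g h : R[X]} :
    mk f g = mk f h ↔ ∃ q, g = h + f * q := by
  rw [mk_eq_mk]
  exact ⟨fun ⟨q, hq⟩ ↦ ⟨q, by linear_combination hq⟩,
    fun ⟨q, hq⟩ ↦ ⟨q, by linear_combination hq⟩⟩

theorem AdjoinRoot.mk_modByMonic {R : Type*} [CommRing R] {f : R[X]} (hf : f.Monic) (g : R[X]) :
    mk f (g %ₘ f) = mk f g := by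
  rw [← modByMonicHom_mk hf, mk_leftInverse hf]

theorem stmt_7_general (f : Polynomial ℤ) (hf : f.Monic) (n : ℕ) (hdeg : f.natDegree = n)
    (p : ℕ) (hodd : Odd p) (m : ℕ) (hm : 1 ≤ m)
    (k : ℕ) (s : Polynomial ℤ) (hs_deg : s.degree < n)
    (hs_p : ∃ i : ℕ, ¬(p : ℤ) ∣ s.coeff i)
    (hcong : ∃ q : Polynomial ℤ, (X : Polynomial ℤ) ^ k = 1 + C ((p : ℤ) ^ m) * s + f * q) :
    ∃ l : Polynomial ℤ, l.degree < n ∧ (∃ i : ℕ, ¬(p : ℤ) ∣ l.coeff i) ∧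
      ∃ q : Polynomial ℤ, (X : Polynomial ℤ) ^ (p * k) = 1 + C ((p : ℤ) ^ (m + 1)) * l + f * q := by
  have hfdeg : f.degree = n := by rw [degree_eq_natDegree hf.ne_zero, hdeg]
  obtain ⟨b, hb⟩ := exists_one_add_pow_mul_pow_eq hodd hm s
  refine ⟨(s + p * b) %ₘ f, hfdeg ▸ degree_modByMonic_lt _ hf,
    exists_not_dvd_coeff_add_mul_modByMonic hf (hfdeg ▸ hs_deg) hs_p b, ?_⟩
  rw [← AdjoinRoot.mk_eq_mk_iff_exists] at hcong ⊢
  simp only [C_pow, C_eq_natCast] at hcong ⊢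
  calc AdjoinRoot.mk f (X ^ (p * k)) = AdjoinRoot.mk f (X ^ k) ^ p := by
        rw [mul_comm, pow_mul, map_pow]
    _ = AdjoinRoot.mk f (1 + (p : ℤ[X]) ^ (m + 1) * (s + p * b)) := by rw [hcong, ← map_pow, hb]
    _ = _ := by simp only [map_add, map_mul, AdjoinRoot.mk_modByMonic hf]

/-- Let `f ∈ ℤ[X]` be monic of degree `n`, `p` an odd prime, `m ≥ 1`, and
suppose `X^k ≡ 1 + p^m s(X) mod f(X)` where `deg s < n` and not all
coefficients of `s` are divisible by `p`. Then
`X^{pk} ≡ 1 + p^{m+1} l(X) mod f(X)` for some `l` of degree `< n`, not all of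
whose coefficients are divisible by `p`. -/
theorem stmt_7 (f : Polynomial ℤ) (hf : f.Monic) (n : ℕ) (hdeg : f.natDegree = n)
    (p : ℕ) (hp : p.Prime) (hodd : Odd p) (m : ℕ) (hm : 1 ≤ m)
    (k : ℕ) (s : Polynomial ℤ) (hs_deg : s.degree < n)
    (hs_p : ∃ i : ℕ, ¬(p : ℤ) ∣ s.coeff i)
    (hcong : ∃ q : Polynomial ℤ, (X : Polynomial ℤ) ^ k = 1 + C ((p : ℤ) ^ m) * s + f * q) :
    ∃ l : Polynomial ℤ, l.degree < n ∧ (∃ i : ℕ, ¬(p : ℤ) ∣ l.coeff i) ∧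
      ∃ q : Polynomial ℤ, (X : Polynomial ℤ) ^ (p * k) = 1 + C ((p : ℤ) ^ (m + 1)) * l + f * q :=
  stmt_7_general f hf n hdeg p hodd m hm k s hs_deg hs_p hcong
end

section
/- Let A, B, P be n × n integer matrices with det(P) ≠ 0 and PA = BP. If O is a periodic orbit of the toral endomorphism induced by B with period T(O), then there exists a periodic orbit O' of the toral endomorphism induced by A contained in P⁻¹(O mod 1) whose period T(O') satisfies T(O') = k·T(O) for some integer k with 1 ≤ k ≤ |det(P)|. -/
/-- `x` and `y` in `ℝⁿ` represent the same point of the torus `ℝⁿ/ℤⁿ`. -/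
def TorusEq {n : ℕ} (x y : Fin n → ℝ) : Prop :=
  ∀ i, ∃ m : ℤ, x i - y i = (m : ℝ)

/-- The real matrix induced by an integer matrix. -/
def intMatToReal {n : ℕ} (M : Matrix (Fin n) (Fin n) ℤ) : Matrix (Fin n) (Fin n) ℝ :=
  M.map (Int.cast : ℤ → ℝ)

/-- `x` represents a periodic point of the toral endomorphism induced by `M`,
with minimal period `T`. -/
def IsMinPeriodicPt {n : ℕ} (M : Matrix (Fin n) (Fin n) ℤ) (x : Fin n → ℝ) (T : ℕ) : Prop :=
  0 < T ∧ TorusEq (((intMatToReal M) ^ T).mulVec x) x ∧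
    ∀ t : ℕ, 0 < t → TorusEq (((intMatToReal M) ^ t).mulVec x) x → T ≤ t

/-
If `PA = BP`, the endomorphism `P` of `𝕋ⁿ` semiconjugates `A` to `B`. Its fibres are cosets of
`P⁻¹ℤⁿ/ℤⁿ ≅ ℤⁿ/Pℤⁿ`, a group of order `|det P|`, and since `x` has `B`-period `T`, the map `A^T`
sends the fibre over `x` into itself. A self-map of a set with `|det P|` points has a periodic
point `y` of period `k ≤ |det P|`. As `P` maps `y` to `x`, the `A`-period `T'` of `y` is a
multiple of `T`, so the `A^T`-period of `y` is `k = T' / T`.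
-/

open Function Set

theorem Set.MapsTo.exists_minimalPeriod_le_ncard {α : Type*} {f : α → α} {s : Set α}
    (hs : s.Finite) (hf : MapsTo f s s) (hne : s.Nonempty) :
    ∃ y ∈ s, 0 < minimalPeriod f y ∧ minimalPeriod f y ≤ s.ncard := by
  obtain ⟨x, hx⟩ := hne
  obtain ⟨p, hp, q, hq, hpq, heq⟩ := exists_ne_map_eq_of_ncard_lt_of_maps_to
    (s := Iic s.ncard) (f := (f^[·] x)) (by simp) (fun i _ => hf.iterate i hx) hs
  wlog hlt : p < q generalizing p q
  · exact this q hq p hp hpq.symm heq.symm (by omega)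
  have hper : IsPeriodicPt f (q - p) (f^[p] x) := by
    rw [IsPeriodicPt, IsFixedPt, ← iterate_add_apply, Nat.sub_add_cancel hlt.le, heq]
  refine ⟨f^[p] x, hf.iterate p hx, hper.minimalPeriod_pos (by omega), ?_⟩
  exact (hper.minimalPeriod_le (by omega)).trans (by simp at hq; omega)

theorem Matrix.natCard_quotient_range_toLin' {ι : Type*} [Fintype ι] [DecidableEq ι]
    (P : Matrix ι ι ℤ) (hdet : P.det ≠ 0) :
    Nat.card ((ι → ℤ) ⧸ LinearMap.range P.toLin') = P.det.natAbs := by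
  rw [← Submodule.natAbs_det_equiv _ (LinearEquiv.ofInjective _
    (P.mulVec_injective_of_det_ne_zero hdet)), ← LinearMap.det_toLin' P]
  rfl

theorem Matrix.finite_quotient_range_toLin' {ι : Type*} [Fintype ι] [DecidableEq ι]
    {P : Matrix ι ι ℤ} (hdet : P.det ≠ 0) : Finite ((ι → ℤ) ⧸ LinearMap.range P.toLin') :=
  Nat.finite_of_card_ne_zero <| by
    rw [P.natCard_quotient_range_toLin' hdet]; exact Int.natAbs_ne_zero.mpr hdet

variable {n : ℕ}

lemma intMatToReal_mul (M N : Matrix (Fin n) (Fin n) ℤ) :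
    intMatToReal (M * N) = intMatToReal M * intMatToReal N :=
  map_mul (Int.castRingHom ℝ).mapMatrix M N

lemma intMatToReal_mulVec_intCast (M : Matrix (Fin n) (Fin n) ℤ) (v : Fin n → ℤ) :
    (intMatToReal M).mulVec (fun i => (v i : ℝ)) = fun i => ((M.mulVec v i : ℤ) : ℝ) := by
  ext i
  simp [intMatToReal, Matrix.mulVec, dotProduct]

lemma isUnit_det_intMatToReal {P : Matrix (Fin n) (Fin n) ℤ} (hdet : P.det ≠ 0) :
    IsUnit (intMatToReal P).det := by
  rw [intMatToReal, ← Int.cast_det]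
  exact isUnit_iff_ne_zero.mpr (Int.cast_ne_zero.mpr hdet)

def toTorus (n : ℕ) : (Fin n → ℝ) →+ UnitAddTorus (Fin n) :=
  (QuotientAddGroup.mk' (AddSubgroup.zmultiples (1 : ℝ))).compLeft (Fin n)

lemma toTorus_surjective : Surjective (toTorus n) :=
  Surjective.piMap fun _ => QuotientAddGroup.mk_surjective

lemma torusEq_iff {x y : Fin n → ℝ} : TorusEq x y ↔ toTorus n x = toTorus n y := by
  simp [TorusEq, funext_iff, toTorus, QuotientAddGroup.eq_iff_sub_mem,
    AddSubgroup.mem_zmultiples_iff, eq_comm]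

def toralEndo (M : Matrix (Fin n) (Fin n) ℤ) (θ : UnitAddTorus (Fin n)) : UnitAddTorus (Fin n) :=
  fun i => ∑ j, M i j • θ j

lemma toTorus_mulVec (M : Matrix (Fin n) (Fin n) ℤ) (x : Fin n → ℝ) :
    toTorus n ((intMatToReal M).mulVec x) = toralEndo M (toTorus n x) := by
  ext i
  simp only [toTorus, toralEndo, AddMonoidHom.compLeft_apply, comp_apply, Matrix.mulVec,
    dotProduct, intMatToReal, Matrix.map_apply, QuotientAddGroup.mk'_apply]
  rw [QuotientAddGroup.mk_sum]
  exact Finset.sum_congr rfl fun j _ => by rw [← zsmul_eq_mul, QuotientAddGroup.mk_zsmul]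

lemma iterate_toralEndo_toTorus (M : Matrix (Fin n) (Fin n) ℤ) (t : ℕ) (x : Fin n → ℝ) :
    (toralEndo M)^[t] (toTorus n x) = toTorus n ((intMatToReal M ^ t).mulVec x) := by
  induction t with
  | zero => simp
  | succ t ih => rw [iterate_succ_apply', ih, ← toTorus_mulVec, Matrix.mulVec_mulVec, pow_succ']

lemma isPeriodicPt_toralEndo_iff {M : Matrix (Fin n) (Fin n) ℤ} {t : ℕ} {x : Fin n → ℝ} :
    IsPeriodicPt (toralEndo M) t (toTorus n x) ↔ TorusEq ((intMatToReal M ^ t).mulVec x) x := by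
  rw [torusEq_iff, ← iterate_toralEndo_toTorus]
  rfl

lemma isMinPeriodicPt_iff {M : Matrix (Fin n) (Fin n) ℤ} {x : Fin n → ℝ} {T : ℕ} :
    IsMinPeriodicPt M x T ↔ 0 < T ∧ minimalPeriod (toralEndo M) (toTorus n x) = T := by
  simp only [IsMinPeriodicPt, ← isPeriodicPt_toralEndo_iff]
  constructor
  · rintro ⟨hT, hper, hmin⟩
    refine ⟨hT, le_antisymm (hper.minimalPeriod_le hT) (hmin _ ?_ (isPeriodicPt_minimalPeriod _ _))⟩
    exact hper.minimalPeriod_pos hT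
  · rintro ⟨hT, rfl⟩
    exact ⟨hT, isPeriodicPt_minimalPeriod _ _, fun t ht hper => hper.minimalPeriod_le ht⟩

lemma semiconj_toralEndo {A B P : Matrix (Fin n) (Fin n) ℤ} (hPA : P * A = B * P) :
    Semiconj (toralEndo P) (toralEndo A) (toralEndo B) := by
  intro θ
  obtain ⟨x, rfl⟩ := toTorus_surjective θ
  simp only [← toTorus_mulVec, Matrix.mulVec_mulVec, ← intMatToReal_mul, hPA]

lemma toTorus_intCast (v : Fin n → ℤ) : toTorus n (fun i => (v i : ℝ)) = 0 := by
  rw [← map_zero (toTorus n), ← torusEq_iff]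
  exact fun i => ⟨v i, by simp⟩

lemma exists_preimage_toralEndo_subset_range {P : Matrix (Fin n) (Fin n) ℤ}
    (hdet : P.det ≠ 0) (ξ : UnitAddTorus (Fin n)) :
    ∃ f : (Fin n → ℤ) ⧸ LinearMap.range P.toLin' → UnitAddTorus (Fin n),
      toralEndo P ⁻¹' {ξ} ⊆ range f := by
  obtain ⟨x, rfl⟩ := toTorus_surjective ξ
  set Q := (intMatToReal P)⁻¹
  have hQ : Q * intMatToReal P = 1 := Matrix.nonsing_inv_mul _ (isUnit_det_intMatToReal hdet)
  -- `g v = P⁻¹ v mod ℤⁿ` vanishes on `Pℤⁿ`, and the fibre over `x` is `P⁻¹ x + g(ℤⁿ)`.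
  let g : (Fin n → ℤ) →ₗ[ℤ] UnitAddTorus (Fin n) := AddMonoidHom.toIntLinearMap <|
    (toTorus n).comp <| Q.mulVecLin.toAddMonoidHom.comp <| (Int.castAddHom ℝ).compLeft (Fin n)
  have hg : LinearMap.range P.toLin' ≤ LinearMap.ker g := by
    rintro _ ⟨w, rfl⟩
    change toTorus n (Q.mulVec fun i => ((P.mulVec w i : ℤ) : ℝ)) = 0
    rw [← intMatToReal_mulVec_intCast, Matrix.mulVec_mulVec, hQ, Matrix.one_mulVec,
      toTorus_intCast]
  refine ⟨fun q => toTorus n (Q.mulVec x) + (LinearMap.range P.toLin').liftQ g hg q, ?_⟩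
  rintro θ hθ
  obtain ⟨y, rfl⟩ := toTorus_surjective θ
  rw [mem_preimage, mem_singleton_iff, ← toTorus_mulVec, ← torusEq_iff] at hθ
  choose v hv using hθ
  refine ⟨Submodule.Quotient.mk v, ?_⟩
  dsimp only
  have hPy : (intMatToReal P).mulVec y = x + fun i => (v i : ℝ) :=
    funext fun i => by simp [← hv i]
  have hy : y = Q.mulVec x + Q.mulVec (fun i => (v i : ℝ)) := by
    rw [← Matrix.mulVec_add, ← hPy, Matrix.mulVec_mulVec, hQ, Matrix.one_mulVec]
  rw [Submodule.liftQ_apply, hy, map_add]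
  rfl

section Fiber

variable {P : Matrix (Fin n) (Fin n) ℤ} (hdet : P.det ≠ 0) (ξ : UnitAddTorus (Fin n))
include hdet

lemma finite_preimage_toralEndo : (toralEndo P ⁻¹' {ξ}).Finite := by
  obtain ⟨f, hf⟩ := exists_preimage_toralEndo_subset_range hdet ξ
  have := Matrix.finite_quotient_range_toLin' hdet
  exact (finite_range f).subset hf

lemma ncard_preimage_toralEndo_le : (toralEndo P ⁻¹' {ξ}).ncard ≤ P.det.natAbs := by
  obtain ⟨f, hf⟩ := exists_preimage_toralEndo_subset_range hdet ξ
  have := Matrix.finite_quotient_range_toLin' hdet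
  calc (toralEndo P ⁻¹' {ξ}).ncard ≤ (range f).ncard := ncard_le_ncard hf (finite_range f)
    _ ≤ Nat.card ((Fin n → ℤ) ⧸ LinearMap.range P.toLin') := by
      rw [← Nat.card_coe_set_eq]; exact Finite.card_range_le f
    _ = P.det.natAbs := P.natCard_quotient_range_toLin' hdet

omit ξ in
lemma toralEndo_surjective : Surjective (toralEndo P) := by
  intro θ
  obtain ⟨x, rfl⟩ := toTorus_surjective θ
  refine ⟨toTorus n ((intMatToReal P)⁻¹.mulVec x), ?_⟩
  rw [← toTorus_mulVec, Matrix.mulVec_mulVec,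
    Matrix.mul_nonsing_inv _ (isUnit_det_intMatToReal hdet), Matrix.one_mulVec]

end Fiber

/-- If `P A = B P` with `det P ≠ 0` (integer matrices) and `O` is a periodic
orbit of the toral endomorphism induced by `B`, with period `T`, then inside
`P⁻¹(O)` there is a periodic orbit of the endomorphism induced by `A` whose
period is `k·T` for some `1 ≤ k ≤ |det P|`. -/
theorem stmt_8 (n : ℕ) (A B P : Matrix (Fin n) (Fin n) ℤ)
    (hdet : P.det ≠ 0) (hPA : P * A = B * P)
    (x : Fin n → ℝ) (T : ℕ) (hx : IsMinPeriodicPt B x T) :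
    ∃ (y : Fin n → ℝ) (T' k : ℕ),
      IsMinPeriodicPt A y T' ∧
      T' = k * T ∧ 1 ≤ k ∧ (k : ℤ) ≤ |P.det| ∧
      -- the orbit of `y` is contained in the preimage under `P` of the orbit of `x`
      ∀ j : ℕ, ∃ i : ℕ,
        TorusEq ((intMatToReal P).mulVec (((intMatToReal A) ^ j).mulVec y))
          (((intMatToReal B) ^ i).mulVec x) := by
  obtain ⟨hT, hTx⟩ := isMinPeriodicPt_iff.mp hx
  have hPA' := semiconj_toralEndo hPA
  have hmaps : MapsTo (toralEndo A)^[T] (toralEndo P ⁻¹' {toTorus n x})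
      (toralEndo P ⁻¹' {toTorus n x}) := fun θ (hθ : toralEndo P θ = _) => by
    rw [mem_preimage, mem_singleton_iff, (hPA'.iterate_right T).eq, hθ, ← hTx,
      iterate_minimalPeriod]
  obtain ⟨θ, hθ : toralEndo P θ = _, hpos, hle⟩ := hmaps.exists_minimalPeriod_le_ncard
    (finite_preimage_toralEndo hdet _) (toralEndo_surjective hdet _)
  have hdvd : T ∣ minimalPeriod (toralEndo A) θ := by
    rw [← hTx, ← hθ]
    exact ((isPeriodicPt_minimalPeriod _ θ).map hPA').minimalPeriod_dvd
  rw [minimalPeriod_iterate_eq_div_gcd hT.ne', Nat.gcd_eq_right hdvd] at hpos hle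
  obtain ⟨y, rfl⟩ := toTorus_surjective θ
  refine ⟨y, _, _, isMinPeriodicPt_iff.mpr ⟨Nat.pos_of_div_pos hpos, rfl⟩,
    (Nat.div_mul_cancel hdvd).symm, hpos, ?_, fun j => ⟨j, ?_⟩⟩
  · rw [Int.abs_eq_natAbs]
    exact_mod_cast hle.trans (ncard_preimage_toralEndo_le hdet _)
  · rw [torusEq_iff, ← iterate_toralEndo_toTorus, toTorus_mulVec, ← iterate_toralEndo_toTorus,
      (hPA'.iterate_right j).eq, hθ]
end

section
/- Let c₀ be an integer with |c₀| ≥ 2 and let p be an odd prime with gcd(p, c₀) = 1. For k ≥ 1, consider the point v_k = p^{−k} mod 1 on the circle 𝕋¹ under the endomorphism x ↦ c₀ x mod 1. Set d = min{ n > 0 : p ∣ c₀ⁿ − 1 } and t = v_p(c₀^d − 1). Then the forward orbit O_k of v_k is periodic with period T(O_k) ≥ p^{k−t} for k ≥ t, and the minimal distance between distinct orbit points satisfies d(O_k) ≥ p^{−k}; consequently d(O_k)·T(O_k) ≥ p^{−t}. -/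
/-!
The orbit of `p⁻ᵏ` lies in the cyclic subgroup it generates, on which multiplication by `c₀`
acts through the residue of `c₀` modulo `pᵏ`; so the period is the multiplicative
order of `c₀` modulo `pᵏ`, and distinct orbit points are distinct nonzero multiples of `p⁻ᵏ`,
hence at distance at least `p⁻ᵏ`. That order is a multiple `d q` of `d`, and lifting the
exponent gives `v_p(c₀^(d q) - 1) = t + v_p(q)`, so `p^(k-t)` divides `q`.
-/

theorem orderOf_eq_sInf_pos_pow_eq_one {M : Type*} [Monoid M] (x : M) :
    orderOf x = sInf {n : ℕ | 0 < n ∧ x ^ n = 1} := by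
  rcases (orderOf x).eq_zero_or_pos with h | h
  · rw [h, eq_comm, Nat.sInf_eq_zero]
    right
    ext n
    simpa using orderOf_eq_zero_iff'.mp h n
  · exact le_antisymm (le_csInf ⟨_, h, pow_orderOf_eq_one x⟩ fun n hn ↦
      orderOf_le_of_pow_eq_one hn.1 hn.2) (Nat.sInf_le ⟨h, pow_orderOf_eq_one x⟩)

theorem ZMod.intCast_pow_eq_one_iff_dvd {N : ℕ} (c : ℤ) (n : ℕ) :
    (c : ZMod N) ^ n = 1 ↔ (N : ℤ) ∣ c ^ n - 1 := by
  rw [← Int.cast_pow, ← Int.cast_one, ZMod.intCast_eq_intCast_iff_dvd_sub, dvd_sub_comm]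

theorem ZMod.orderOf_intCast_pos {N : ℕ} [NeZero N] {c : ℤ} (h : IsCoprime c N) :
    0 < orderOf (c : ZMod N) :=
  ((ZMod.coe_int_isUnit_iff_isCoprime c N).mpr h.symm).isOfFinOrder.orderOf_pos

theorem Int.pow_ne_one_of_two_le_abs {c : ℤ} (hc : 2 ≤ |c|) {n : ℕ} (hn : n ≠ 0) :
    c ^ n ≠ 1 := by
  intro h
  rcases pow_eq_one_iff_cases.mp h with h | h | ⟨h, -⟩ <;> simp_all

theorem padicValInt_eq_emultiplicity {p : ℕ} [Fact p.Prime] {z : ℤ} (hz : z ≠ 0) :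
    (padicValInt p z : ℕ∞) = emultiplicity (p : ℤ) z := by
  rw [padicValInt, padicValNat_eq_emultiplicity (Int.natAbs_ne_zero.mpr hz),
    Int.emultiplicity_natAbs]

theorem Int.pow_sub_padicValInt_dvd_of_pow_dvd_pow_sub_one {p : ℕ} [hp : Fact p.Prime]
    (hodd : Odd p) {x : ℤ} (hx : (p : ℤ) ∣ x - 1) (hx1 : x ≠ 1) {k q : ℕ}
    (hk : (p : ℤ) ^ k ∣ x ^ q - 1) : p ^ (k - padicValInt p (x - 1)) ∣ q := by
  rcases eq_or_ne q 0 with rfl | hq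
  · exact dvd_zero _
  have hpx : ¬ (p : ℤ) ∣ x := fun h ↦
    hp.out.not_dvd_one (Int.natCast_dvd_natCast.mp (by simpa using dvd_sub h hx))
  have lte := Int.emultiplicity_pow_sub_pow hp.out hodd (y := 1) (by simpa using hx) hpx q
  rw [one_pow, ← padicValInt_eq_emultiplicity (sub_ne_zero.mpr hx1),
    ← padicValNat_eq_emultiplicity hq] at lte
  have hle : k ≤ padicValInt p (x - 1) + padicValNat p q := by
    exact_mod_cast lte ▸ le_emultiplicity_of_pow_dvd hk
  exact (pow_dvd_pow p (by omega)).trans pow_padicValNat_dvd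

theorem Int.pow_sub_padicValInt_dvd_orderOf {p : ℕ} [Fact p.Prime] (hodd : Odd p) {c : ℤ}
    (hne : c ^ orderOf (c : ZMod p) ≠ 1) (k : ℕ) :
    p ^ (k - padicValInt p (c ^ orderOf (c : ZMod p) - 1)) ∣ orderOf (c : ZMod (p ^ k)) := by
  rcases Nat.eq_zero_or_pos k with rfl | hk
  · simp
  set d := orderOf (c : ZMod p)
  have hdvd : d ∣ orderOf (c : ZMod (p ^ k)) := by
    simpa using orderOf_map_dvd (ZMod.castHom (dvd_pow_self p hk.ne') (ZMod p)).toMonoidHom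
      (c : ZMod (p ^ k))
  obtain ⟨q, hq⟩ := hdvd
  have hpk : ((p ^ k : ℕ) : ℤ) ∣ (c ^ d) ^ q - 1 := by
    rw [← pow_mul, ← hq, ← ZMod.intCast_pow_eq_one_iff_dvd]
    exact pow_orderOf_eq_one _
  have hp : (p : ℤ) ∣ c ^ d - 1 := (ZMod.intCast_pow_eq_one_iff_dvd c d).mp (pow_orderOf_eq_one _)
  rw [hq]
  exact (Int.pow_sub_padicValInt_dvd_of_pow_dvd_pow_sub_one hodd hp hne
    (by exact_mod_cast hpk)).mul_left d

namespace AddCircle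

variable {T : ℝ} [Fact (0 < T)]

theorem div_natCast_le_norm_of_nsmul_eq_zero {x : AddCircle T} {N : ℕ} (hN : 0 < N)
    (hx : x ≠ 0) (hNx : N • x = 0) : T / N ≤ ‖x‖ := by
  have hfin : IsOfFinAddOrder x := isOfFinAddOrder_iff_nsmul_eq_zero.mpr ⟨N, hN, hNx⟩
  have hle : (addOrderOf x : ℝ) ≤ N := by exact_mod_cast addOrderOf_le_of_nsmul_eq_zero hN hNx
  rw [div_le_iff₀ (by positivity)]
  calc T ≤ addOrderOf x • ‖x‖ := le_add_order_smul_norm_of_isOfFinAddOrder hfin hx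
    _ = ‖x‖ * addOrderOf x := by rw [nsmul_eq_mul, mul_comm]
    _ ≤ ‖x‖ * N := by gcongr

theorem zsmul_period_div_eq_zsmul_iff {N : ℕ} (hN : 0 < N) (a b : ℤ) :
    a • ((T / N : ℝ) : AddCircle T) = b • ((T / N : ℝ) : AddCircle T) ↔ (a : ZMod N) = b := by
  rw [zsmul_eq_zsmul_iff_modEq, addOrderOf_period_div hN, ZMod.intCast_eq_intCast_iff]

theorem div_natCast_le_dist_zsmul_period_div {N : ℕ} (hN : 0 < N) {a b : ℤ}
    (hab : a • ((T / N : ℝ) : AddCircle T) ≠ b • ((T / N : ℝ) : AddCircle T)) :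
    T / N ≤ dist (a • ((T / N : ℝ) : AddCircle T)) (b • ((T / N : ℝ) : AddCircle T)) := by
  have hNv : N • ((T / N : ℝ) : AddCircle T) = 0 := by
    simpa [addOrderOf_period_div hN] using addOrderOf_nsmul_eq_zero ((T / N : ℝ) : AddCircle T)
  rw [dist_eq_norm]
  refine div_natCast_le_norm_of_nsmul_eq_zero hN (sub_ne_zero.mpr hab) ?_
  rw [← sub_smul, smul_comm, hNv, smul_zero]

end AddCircle

/-- The circle case: for `|c₀| ≥ 2`, `p` an odd prime coprime to `c₀`,
`d = min{n > 0 : p ∣ c₀ⁿ - 1}`, `t = v_p(c₀^d - 1)` and `k ≥ t`, the point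
`v = p⁻ᵏ` on `𝕋¹ = ℝ/ℤ` has a periodic forward orbit under `x ↦ c₀x` whose
period `T` satisfies `T ≥ p^(k-t)`, distinct orbit points are at distance
`≥ p⁻ᵏ`, and hence `d(O)·T ≥ p⁻ᵗ`. -/
theorem stmt_11 (c₀ : ℤ) (hc : 2 ≤ |c₀|) (p : ℕ) (hp : p.Prime) (hodd : Odd p)
    (hcop : IsCoprime c₀ (p : ℤ)) (d t : ℕ)
    (hd : d = sInf {n : ℕ | 0 < n ∧ (p : ℤ) ∣ c₀ ^ n - 1})
    (ht : t = padicValInt p (c₀ ^ d - 1))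
    (k : ℕ) (hk : t ≤ k)
    (v : AddCircle (1 : ℝ)) (hv : v = (((p : ℝ) ^ k)⁻¹ : ℝ))
    (T : ℕ) (hT : T = sInf {m : ℕ | 0 < m ∧ (c₀ ^ m : ℤ) • v = v})
    (hnontriv : ∃ i j : ℕ, (c₀ ^ i : ℤ) • v ≠ (c₀ ^ j : ℤ) • v)
    (dO : ℝ)
    (hdO : dO = sInf {r : ℝ | ∃ i j : ℕ, (c₀ ^ i : ℤ) • v ≠ (c₀ ^ j : ℤ) • v ∧
      r = dist ((c₀ ^ i : ℤ) • v) ((c₀ ^ j : ℤ) • v)}) :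
    (∃ m : ℕ, 0 < m ∧ (c₀ ^ m : ℤ) • v = v) ∧
    (p : ℝ) ^ (k - t) ≤ (T : ℝ) ∧
    ((p : ℝ) ^ k)⁻¹ ≤ dO ∧
    ((p : ℝ) ^ t)⁻¹ ≤ dO * T := by
  have : Fact p.Prime := ⟨hp⟩
  have hN : 0 < p ^ k := pow_pos hp.pos k
  have hv' : v = ((1 / ((p ^ k : ℕ) : ℝ) : ℝ) : AddCircle (1 : ℝ)) := by
    rw [hv, one_div, Nat.cast_pow]
  have hfix (m : ℕ) : (c₀ ^ m : ℤ) • v = v ↔ (c₀ : ZMod (p ^ k)) ^ m = 1 := by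
    simpa [hv'] using AddCircle.zsmul_period_div_eq_zsmul_iff (T := 1) hN (c₀ ^ m) 1
  have hd' : d = orderOf (c₀ : ZMod p) := by
    simp only [hd, orderOf_eq_sInf_pos_pow_eq_one, ZMod.intCast_pow_eq_one_iff_dvd]
  have hT' : T = orderOf (c₀ : ZMod (p ^ k)) := by
    simp only [hT, orderOf_eq_sInf_pos_pow_eq_one, hfix]
  have hTpos : 0 < T := hT' ▸ ZMod.orderOf_intCast_pos (by exact_mod_cast hcop.pow_right)
  have hTdvd : p ^ (k - t) ∣ T := by
    have hdpos : 0 < d := hd' ▸ ZMod.orderOf_intCast_pos hcop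
    have hne : c₀ ^ orderOf (c₀ : ZMod p) ≠ 1 := hd' ▸ Int.pow_ne_one_of_two_le_abs hc hdpos.ne'
    simpa only [← hd', ← ht, ← hT'] using Int.pow_sub_padicValInt_dvd_orderOf hodd hne k
  have hsep : ((p : ℝ) ^ k)⁻¹ ≤ dO := by
    obtain ⟨i, j, hij⟩ := hnontriv
    rw [hdO]
    refine le_csInf ⟨_, i, j, hij, rfl⟩ ?_
    rintro r ⟨i, j, hij, rfl⟩
    rw [hv'] at hij ⊢
    simpa using AddCircle.div_natCast_le_dist_zsmul_period_div hN hij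
  have hTle : (p : ℝ) ^ (k - t) ≤ T := by exact_mod_cast Nat.le_of_dvd hTpos hTdvd
  refine ⟨⟨T, hTpos, (hfix T).mpr (hT' ▸ pow_orderOf_eq_one _)⟩, hTle, hsep, ?_⟩
  calc ((p : ℝ) ^ t)⁻¹ = ((p : ℝ) ^ k)⁻¹ * (p : ℝ) ^ (k - t) := by
        rw [← Nat.sub_add_cancel hk, pow_add, Nat.add_sub_cancel, mul_inv, mul_comm,
          mul_inv_cancel_left₀ (pow_ne_zero _ (Nat.cast_ne_zero.mpr hp.ne_zero))]
    _ ≤ dO * T := mul_le_mul hsep hTle (by positivity) ((by positivity : (0:ℝ) ≤ _).trans hsep)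
end

section
/- Let B be an n × n integer matrix whose characteristic polynomial is irreducible over ℚ, let p be a prime, k ≥ 1, and let w ∈ ℤⁿ and b ∈ ℤ satisfy Bw ≡ bw mod p^k with w ≢ 0 mod p. Define a ∈ ℤⁿ with entries |a_i| < p^k/2 representing B^i w − B^j w mod p^k for some 0 ≤ j < i. If a ≠ 0, then |det(a, Ba, B²a, …, B^{n−1}a)| ≥ p^{k(n−1)}. -/
/-!
Write `K(a)` for the Krylov matrix with columns `a, Ba, …, B^{n-1}a`.

Reducing mod `p^k`, `w` is an eigenvector of `B` with eigenvalue `b`, hence so is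
`a ≡ (b^i - b^j) w`, and `B^t a ≡ b^t a`. Subtracting `b^t` times the first column of `K(a)` from
the `t`-th one leaves the determinant unchanged and makes the other `n - 1` columns divisible by
`p^k`, so `p^{k(n-1)} ∣ det K(a)`.

Over `ℚ`, a vector `c` in the kernel of `K(a)` is the coefficient vector of a polynomial `q` of
degree `< n` with `q(B) a = 0`. Since the characteristic polynomial is irreducible of degree `n`,
it is coprime to `q ≠ 0`, so `q(B)` is invertible and `a = 0`. Hence `det K(a) ≠ 0`, and a nonzero
multiple of `p^{k(n-1)}` has absolute value at least `p^{k(n-1)}`.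
-/

open Polynomial

namespace Matrix

section

variable {ι R : Type*} [Fintype ι] [DecidableEq ι] [CommRing R]

theorem pow_card_dvd_det_of_dvd_cols (M : Matrix ι ι R) (m : R) (S : Finset ι)
    (h : ∀ s, ∀ t ∈ S, m ∣ M s t) : m ^ S.card ∣ M.det := by
  have hcol : ∀ t, ∃ col : ι → R, ∀ s, M s t = (if t ∈ S then m else 1) * col s := by
    intro t
    split_ifs with ht
    · choose col hcol using fun s => h s t ht
      exact ⟨col, hcol⟩
    · exact ⟨fun s => M s t, fun s => (one_mul _).symm⟩
  choose N hN using hcol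
  have hM : M = of fun s t => (if t ∈ S then m else 1) * (of fun s t => N t s) s t := by
    ext s t
    exact hN t s
  rw [hM, det_mul_row, Finset.prod_ite_mem, Finset.univ_inter, Finset.prod_const]
  exact dvd_mul_right _ _

theorem pow_card_sub_one_dvd_det (M : Matrix ι ι R) (m : R) (k : ι) (c : ι → R)
    (h : ∀ s t, t ≠ k → m ∣ M s t - c t * M s k) : m ^ (Fintype.card ι - 1) ∣ M.det := by
  let c' : ι → R := fun t => if t = k then 0 else c t
  let N : Matrix ι ι R := of fun s t => M s t - c' t * M s k
  have hN : M.det = N.det := by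
    rw [← det_transpose M, ← det_transpose N]
    exact det_eq_of_forall_row_eq_smul_add_const c' k (by simp [c']) fun t s => by simp [N, c']
  rw [hN, ← Finset.card_univ, ← Finset.card_erase_of_mem (Finset.mem_univ k)]
  refine N.pow_card_dvd_det_of_dvd_cols m _ fun s t ht => ?_
  simpa [N, c', (Finset.mem_erase.1 ht).1] using h s t (Finset.mem_erase.1 ht).1

theorem eq_zero_of_isCoprime_charpoly {A : Matrix ι ι R} {q : R[X]}
    (hq : IsCoprime A.charpoly q) {v : ι → R} (hv : aeval A q *ᵥ v = 0) : v = 0 := by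
  obtain ⟨u, w, huw⟩ := hq
  have hinv : aeval A w * aeval A q = 1 := by
    simpa [aeval_self_charpoly] using congrArg (aeval A) huw
  rw [← one_mulVec v, ← hinv, ← mulVec_mulVec, hv, mulVec_zero]

end

theorem pow_mulVec_of_mulVec_eq_smul {ι R : Type*} [Fintype ι] [DecidableEq ι] [CommSemiring R]
    {A : Matrix ι ι R} {v : ι → R} {b : R} (h : A *ᵥ v = b • v) (t : ℕ) :
    A ^ t *ᵥ v = b ^ t • v := by
  induction t with
  | zero => simp
  | succ t ih => rw [pow_succ', ← mulVec_mulVec, ih, mulVec_smul, h, smul_smul, pow_succ]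

def krylov {R : Type*} [CommSemiring R] {n : ℕ} (A : Matrix (Fin n) (Fin n) R)
    (v : Fin n → R) : Matrix (Fin n) (Fin n) R :=
  of fun s t => (A ^ (t : ℕ) *ᵥ v) s

section Krylov

variable {R S : Type*} [CommRing R] [CommRing S] {n : ℕ}

theorem krylov_map (f : R →+* S) (A : Matrix (Fin n) (Fin n) R) (v : Fin n → R) :
    (krylov A v).map f = krylov (A.map f) (f ∘ v) := by
  ext s t
  simp [krylov, RingHom.map_mulVec, Matrix.map_pow]

theorem krylov_mulVec (A : Matrix (Fin n) (Fin n) R) (v c : Fin n → R) :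
    krylov A v *ᵥ c = aeval A (∑ t : Fin n, monomial t (c t)) *ᵥ v := by
  simp_rw [map_sum, aeval_monomial, ← Algebra.smul_def, sum_mulVec, smul_mulVec]
  ext s
  simp [krylov, mulVec, dotProduct, mul_comm]

theorem pow_sub_one_dvd_det_krylov (A : Matrix (Fin n) (Fin n) R) (v : Fin n → R) (m b : R)
    (h : ∀ (t : ℕ) (s : Fin n), m ∣ (A ^ t *ᵥ v) s - b ^ t * v s) :
    m ^ (n - 1) ∣ (krylov A v).det := by
  cases n with
  | zero => simp
  | succ n =>
    simpa using pow_card_sub_one_dvd_det _ m 0 (fun t : Fin (n + 1) => b ^ (t : ℕ))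
      fun s t _ => by simpa [krylov] using h t s

theorem det_krylov_ne_zero {K : Type*} [Field K] {A : Matrix (Fin n) (Fin n) K}
    (hA : Irreducible A.charpoly) {v : Fin n → K} (hv : v ≠ 0) : (krylov A v).det ≠ 0 := by
  intro h0
  obtain ⟨c, hc, hker⟩ := exists_mulVec_eq_zero_iff.2 h0
  let q : K[X] := (degreeLTEquiv K n).symm c
  have hq : q ≠ 0 := by simpa [q] using hc
  have hdeg : q.degree < A.charpoly.degree := by
    rw [charpoly_degree_eq_dim, Fintype.card_fin]
    exact mem_degreeLT.1 ((degreeLTEquiv K n).symm c).2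
  have hcop : IsCoprime A.charpoly q := hA.coprime_iff_not_dvd.2 (not_dvd_of_degree_lt hq hdeg)
  exact hv (eq_zero_of_isCoprime_charpoly hcop (by rwa [krylov_mulVec] at hker))

theorem det_krylov_ne_zero_of_injective {K : Type*} [Field K] {f : R →+* K}
    (hf : Function.Injective f) {A : Matrix (Fin n) (Fin n) R}
    (hA : Irreducible (A.charpoly.map f)) {v : Fin n → R} (hv : v ≠ 0) :
    (krylov A v).det ≠ 0 := by
  have hfv : f ∘ v ≠ 0 := fun h => hv (funext fun s => hf (by simpa using congrFun h s))
  have hdet := det_krylov_ne_zero (A := A.map f) (by rwa [charpoly_map]) hfv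
  rw [← krylov_map, ← RingHom.mapMatrix_apply, ← RingHom.map_det] at hdet
  exact fun h => hdet (by rw [h, map_zero])

end Krylov

theorem pow_mulVec_modEq_of_modEq_pow_mulVec_sub {n N : ℕ} {B : Matrix (Fin n) (Fin n) ℤ}
    {w a : Fin n → ℤ} {b : ℤ} {i j : ℕ}
    (hw : ∀ s, (B *ᵥ w) s ≡ b * w s [ZMOD N])
    (ha : ∀ s, a s ≡ (B ^ i *ᵥ w) s - (B ^ j *ᵥ w) s [ZMOD N]) (t : ℕ) (s : Fin n) :
    (B ^ t *ᵥ a) s ≡ b ^ t * a s [ZMOD N] := by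
  let φ := Int.castRingHom (ZMod N)
  have hcast (M : Matrix (Fin n) (Fin n) ℤ) (x : Fin n → ℤ) (s : Fin n) :
      (((M *ᵥ x) s : ℤ) : ZMod N) = (M.map φ *ᵥ (φ ∘ x)) s :=
    RingHom.map_mulVec φ M x s
  have hw' : B.map φ *ᵥ (φ ∘ w) = (b : ZMod N) • (φ ∘ w) := funext fun s => by
    rw [← hcast, (ZMod.intCast_eq_intCast_iff _ _ _).2 (hw s)]
    simp [φ]
  have ha' : φ ∘ a = ((b : ZMod N) ^ i - (b : ZMod N) ^ j) • (φ ∘ w) := funext fun s => by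
    have := (ZMod.intCast_eq_intCast_iff _ _ _).2 (ha s)
    rw [Int.cast_sub, hcast, hcast, Matrix.map_pow, Matrix.map_pow,
      pow_mulVec_of_mulVec_eq_smul hw', pow_mulVec_of_mulVec_eq_smul hw'] at this
    simp [this, φ, sub_mul]
  have hBa : B.map φ *ᵥ (φ ∘ a) = (b : ZMod N) • (φ ∘ a) := by
    rw [ha', mulVec_smul, hw', smul_comm]
  rw [← ZMod.intCast_eq_intCast_iff, hcast, Matrix.map_pow, pow_mulVec_of_mulVec_eq_smul hBa]
  simp [φ]

end Matrix

theorem stmt_12_general (n : ℕ) (B : Matrix (Fin n) (Fin n) ℤ)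
    (hirr : Irreducible (B.charpoly.map (Int.castRingHom ℚ)))
    (p : ℕ) (k : ℕ)
    (w : Fin n → ℤ) (b : ℤ)
    (hew : ∀ s : Fin n, B.mulVec w s ≡ b * w s [ZMOD ((p : ℤ) ^ k)])
    (i j : ℕ)
    (a : Fin n → ℤ)
    (hcong : ∀ s : Fin n, a s ≡ ((B ^ i).mulVec w s - (B ^ j).mulVec w s) [ZMOD ((p : ℤ) ^ k)])
    (ha : a ≠ 0) :
    (p : ℤ) ^ (k * (n - 1)) ≤ |(Matrix.of fun s t : Fin n => (B ^ (t : ℕ)).mulVec a s).det| := by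
  have hdet : (B.krylov a).det ≠ 0 :=
    Matrix.det_krylov_ne_zero_of_injective (Int.castRingHom ℚ).injective_int hirr ha
  have hdvd : ((p : ℤ) ^ k) ^ (n - 1) ∣ (B.krylov a).det := by
    refine Matrix.pow_sub_one_dvd_det_krylov B a _ b fun t s => ?_
    have := Matrix.pow_mulVec_modEq_of_modEq_pow_mulVec_sub (N := p ^ k) (by exact_mod_cast hew)
      (by exact_mod_cast hcong) t s
    exact_mod_cast this.symm.dvd
  rw [pow_mul]
  exact Int.le_of_dvd (abs_pos.2 hdet) ((dvd_abs _ _).2 hdvd)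

/-- Let `B ∈ M_n(ℤ)` have characteristic polynomial irreducible over `ℚ`, and
let `w ∈ ℤⁿ`, `b ∈ ℤ` satisfy `Bw ≡ bw mod p^k` with `w ≢ 0 mod p`. If
`a ∈ ℤⁿ` represents `Bⁱw - Bʲw mod p^k` with entries `|aᵢ| < p^k/2` and
`a ≠ 0`, then `|det(a, Ba, …, B^{n-1}a)| ≥ p^{k(n-1)}`. -/
theorem stmt_12 (n : ℕ) (hn : 0 < n) (B : Matrix (Fin n) (Fin n) ℤ)
    (hirr : Irreducible (B.charpoly.map (Int.castRingHom ℚ)))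
    (p : ℕ) (hp : p.Prime) (k : ℕ) (hk : 1 ≤ k)
    (w : Fin n → ℤ) (b : ℤ)
    (hew : ∀ s : Fin n, B.mulVec w s ≡ b * w s [ZMOD ((p : ℤ) ^ k)])
    (hw : ¬ ∀ s : Fin n, (p : ℤ) ∣ w s)
    (i j : ℕ) (hij : j < i)
    (a : Fin n → ℤ)
    (hbound : ∀ s : Fin n, 2 * |a s| < (p : ℤ) ^ k)
    (hcong : ∀ s : Fin n, a s ≡ ((B ^ i).mulVec w s - (B ^ j).mulVec w s) [ZMOD ((p : ℤ) ^ k)])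
    (ha : a ≠ 0) :
    (p : ℤ) ^ (k * (n - 1)) ≤ |(Matrix.of fun s t : Fin n => (B ^ (t : ℕ)).mulVec a s).det| :=
  stmt_12_general n B hirr p k w b hew i j a hcong ha
end

section
/- Let f(x) = x^n − c_{n−1}x^{n−1} − ⋯ − c₀ and suppose b₁, …, b_n are integers with f(b_i) ≡ 0 mod p^k and b_i ≢ b_j mod p for i ≠ j, where p is a prime. Let {u_m} be the linear recurrence u_{m+n} = c_{n−1}u_{m+n−1} + ⋯ + c₀u_m with initial values (0, …, 0, 1). Then there exist integers r₁, …, r_n such that u_m ≡ r₁ b₁^m + r₂ b₂^m + ⋯ + r_n b_n^m mod p^k for all m ≥ 0. -/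
/-!
Work in `ZMod (p ^ k)`. Each `bᵢ` is a root of the characteristic polynomial, so `m ↦ bᵢ ^ m`
solves the recurrence. As the `bᵢ` are pairwise distinct mod `p`, the Vandermonde determinant
`∏ (bⱼ - bᵢ)` is a unit mod `p ^ k`, so some combination of these geometric solutions has the
same initial values as `u`, and a solution is determined by its initial values.
-/

open Finset Matrix

namespace LinearRecurrence

variable {R : Type*} [CommRing R] (E : LinearRecurrence R)

theorem isRoot_charPoly_iff (q : R) :
    E.charPoly.IsRoot q ↔ q ^ E.order = ∑ i, E.coeffs i * q ^ (i : ℕ) := by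
  simp [charPoly, Polynomial.eval_finsetSum, sub_eq_zero]

theorem isSolution_sum_mul_geom {ι : Type*} [Fintype ι] (s v : ι → R)
    (hv : ∀ i, E.charPoly.IsRoot (v i)) : E.IsSolution fun m ↦ ∑ i, s i * v i ^ m := by
  rw [is_sol_iff_mem_solSpace]
  convert E.solSpace.sum_mem (t := univ) fun i _ ↦ E.solSpace.smul_mem (s i)
    ((E.is_sol_iff_mem_solSpace _).mp ((E.geom_sol_iff_root_charPoly _).mpr (hv i))) using 1
  ext m
  simp

theorem exists_eq_sum_mul_geom (v : Fin E.order → R) (hv : ∀ i, E.charPoly.IsRoot (v i))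
    (hV : IsUnit (vandermonde v).det) {u : ℕ → R} (hu : E.IsSolution u) :
    ∃ s : Fin E.order → R, u = fun m ↦ ∑ i, s i * v i ^ m := by
  set s := (fun j : Fin E.order ↦ u j) ᵥ* (vandermonde v)⁻¹
  have hs : s ᵥ* vandermonde v = fun j : Fin E.order ↦ u j := by
    rw [vecMul_vecMul, nonsing_inv_mul _ hV, vecMul_one]
  refine ⟨s, (E.eq_iff_eqOn_range_order _ _ hu (E.isSolution_sum_mul_geom s v hv)).mpr ?_⟩
  intro m hm
  simpa [vecMul, dotProduct] using (congrFun hs ⟨m, mem_range.mp hm⟩).symm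

end LinearRecurrence

theorem ZMod.isUnit_intCast_of_not_dvd {p : ℕ} (hp : p.Prime) (k : ℕ) {a : ℤ}
    (ha : ¬ (p : ℤ) ∣ a) : IsUnit (a : ZMod (p ^ k)) := by
  rw [ZMod.coe_int_isUnit_iff_isCoprime, Nat.cast_pow]
  exact ((Nat.prime_iff_prime_int.mp hp).coprime_iff_not_dvd.mpr ha).pow_left

theorem isUnit_det_vandermonde_intCast {n p : ℕ} (hp : p.Prime) (k : ℕ) {b : Fin n → ℤ}
    (hb : Pairwise fun i j ↦ ¬ b i ≡ b j [ZMOD p]) :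
    IsUnit (vandermonde fun i ↦ (b i : ZMod (p ^ k))).det := by
  rw [det_vandermonde, IsUnit.prod_univ_iff]
  refine fun i ↦ IsUnit.prod_iff.mpr fun j hj ↦ ?_
  rw [← Int.cast_sub]
  exact ZMod.isUnit_intCast_of_not_dvd hp k
    (mt Int.modEq_iff_dvd.mpr (hb (mem_Ioi.mp hj).ne))

theorem stmt_14_general (n : ℕ) (c : Fin n → ℤ) (p : ℕ) (hp : p.Prime)
    (k : ℕ) (b : Fin n → ℤ)
    (hroot : ∀ i : Fin n,
      (b i) ^ n - (∑ j : Fin n, c j * (b i) ^ (j : ℕ)) ≡ 0 [ZMOD ((p : ℤ) ^ k)])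
    (hdist : ∀ i j : Fin n, i ≠ j → ¬(b i ≡ b j [ZMOD (p : ℤ)]))
    (u : ℕ → ℤ)
    (hrec : ∀ m : ℕ, u (m + n) = ∑ i : Fin n, c i * u (m + i)) :
    ∃ r : Fin n → ℤ, ∀ m : ℕ, u m ≡ ∑ i : Fin n, r i * (b i) ^ m [ZMOD ((p : ℤ) ^ k)] := by
  let E : LinearRecurrence (ZMod (p ^ k)) := ⟨n, fun i ↦ c i⟩
  have hsol : E.IsSolution fun m ↦ (u m : ZMod (p ^ k)) := fun m ↦ by
    simp [E, hrec]
  have hroots : ∀ i, E.charPoly.IsRoot (b i : ZMod (p ^ k)) := fun i ↦ by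
    have := (ZMod.intCast_eq_intCast_iff _ _ (p ^ k)).mpr (by exact_mod_cast hroot i)
    rw [E.isRoot_charPoly_iff, ← sub_eq_zero]
    simpa [E] using this
  obtain ⟨s, hs⟩ :=
    E.exists_eq_sum_mul_geom _ hroots (isUnit_det_vandermonde_intCast hp k hdist) hsol
  choose r hr using fun i ↦ ZMod.intCast_surjective (s i)
  refine ⟨r, fun m ↦ ?_⟩
  rw [← Nat.cast_pow, ← ZMod.intCast_eq_intCast_iff]
  simpa [hr] using congrFun hs m

/-- If `b₁, …, b_n` are roots mod `p^k` of
`f(x) = xⁿ - c_{n-1}x^{n-1} - ⋯ - c₀`, pairwise distinct mod `p`, and `u` is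
the linear recurrence with these coefficients and initial values `(0,…,0,1)`,
then `u_m ≡ r₁b₁^m + ⋯ + r_n b_n^m mod p^k` for some integers `rᵢ` and all `m`. -/
theorem stmt_14 (n : ℕ) (hn : 0 < n) (c : Fin n → ℤ) (p : ℕ) (hp : p.Prime)
    (k : ℕ) (hk : 1 ≤ k) (b : Fin n → ℤ)
    (hroot : ∀ i : Fin n,
      (b i) ^ n - (∑ j : Fin n, c j * (b i) ^ (j : ℕ)) ≡ 0 [ZMOD ((p : ℤ) ^ k)])
    (hdist : ∀ i j : Fin n, i ≠ j → ¬(b i ≡ b j [ZMOD (p : ℤ)]))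
    (u : ℕ → ℤ)
    (hrec : ∀ m : ℕ, u (m + n) = ∑ i : Fin n, c i * u (m + i))
    (hinit : (∀ i : ℕ, i < n - 1 → u i = 0) ∧ u (n - 1) = 1) :
    ∃ r : Fin n → ℤ, ∀ m : ℕ, u m ≡ ∑ i : Fin n, r i * (b i) ^ m [ZMOD ((p : ℤ) ^ k)] :=
  stmt_14_general n c p hp k b hroot hdist u hrec
end

section
/- Let D be an m × m matrix, r ≥ 1, and let B be the rm × rm block matrix with D on the diagonal blocks, identity matrices I on the superdiagonal blocks, and zeros elsewhere. Write B = E + N where E = diag(D, …, D) and N is the nilpotent block superdiagonal part. Then EN = NE, N^r = 0, and for every polynomial h, h(B) = h(E) + h'(E)N + h''(E)N²/2! + ⋯ + h^{(r−1)}(E)N^{r−1}/(r−1)!. -/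
/-!
In a commutative algebra, Taylor's formula `h(x + y) = ∑ₖ (hasseDeriv k h)(x) yᵏ` is the
coefficient expansion of the Taylor shift `h(X + x)` evaluated at `y`; for commuting `x`, `y` in
a noncommutative algebra it holds because they generate a commutative subalgebra. When `yʳ = 0`
the sum stops at `r`, and `k! • hasseDeriv k = derivative^[k]` gives the factorials.
Here `E = 1 ⊗ₖ D` and `N = J ⊗ₖ 1` with `J` the `r × r` shift matrix, so `E` and `N` commute
by the mixed-product rule and `Nʳ = Jʳ ⊗ₖ 1 = 0`.
-/

open Polynomial Finset Matrix Kronecker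
open scoped IsMulCommutative

namespace Polynomial

theorem hasseDeriv_map {R S : Type*} [Semiring R] [Semiring S] (f : R →+* S) (k : ℕ)
    (p : R[X]) : (hasseDeriv k p).map f = hasseDeriv k (p.map f) := by
  ext n
  simp [hasseDeriv_coeff, coeff_map]

section Taylor

variable {R : Type*} [CommSemiring R]

theorem aeval_add_eq_sum_hasseDeriv {S : Type*} [CommSemiring S] [Algebra R S] (x y : S)
    (p : R[X]) {M : ℕ} (hM : p.natDegree < M) :
    aeval (x + y) p = ∑ i ∈ range M, aeval x (hasseDeriv i p) * y ^ i := by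
  have hdeg : (taylor x (p.map (algebraMap R S))).natDegree < M :=
    (natDegree_taylor _ x).trans_lt (natDegree_map_le.trans_lt hM)
  rw [← eval_map_algebraMap, add_comm, ← taylor_eval, eval_eq_sum_range' hdeg]
  simp only [taylor_coeff, ← hasseDeriv_map, eval_map_algebraMap]

theorem aeval_add_eq_sum_hasseDeriv_of_commute {A : Type*} [Semiring A] [Algebra R A]
    {x y : A} (hxy : Commute x y) (p : R[X]) {M : ℕ} (hM : p.natDegree < M) :
    aeval (x + y) p = ∑ i ∈ range M, aeval x (hasseDeriv i p) * y ^ i := by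
  let S := Algebra.adjoin R {x, y}
  have : IsMulCommutative S := Algebra.isMulCommutative_adjoin R <| by
    simp only [Set.mem_insert_iff, Set.mem_singleton_iff]
    rintro a (rfl | rfl) b (rfl | rfl)
    exacts [rfl, hxy.eq, hxy.symm.eq, rfl]
  have := congrArg S.val <| aeval_add_eq_sum_hasseDeriv
    (⟨x, Algebra.subset_adjoin (by simp)⟩ : S) ⟨y, Algebra.subset_adjoin (by simp)⟩ p hM
  simpa only [map_add, map_sum, map_mul, map_pow, ← aeval_algHom_apply, Subalgebra.coe_val]
    using this

theorem aeval_add_eq_sum_hasseDeriv_of_pow_eq_zero {A : Type*} [Semiring A] [Algebra R A]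
    {x y : A} (hxy : Commute x y) {r : ℕ} (hy : y ^ r = 0) (p : R[X]) :
    aeval (x + y) p = ∑ i ∈ range r, aeval x (hasseDeriv i p) * y ^ i := by
  rw [aeval_add_eq_sum_hasseDeriv_of_commute hxy p (M := max r (p.natDegree + 1)) (by omega)]
  refine (sum_subset (range_subset_range.2 (le_max_left _ _)) fun i _ hi => ?_).symm
  rw [pow_eq_zero_of_le (by simpa using hi) hy, mul_zero]

end Taylor

theorem aeval_add_eq_sum_iterate_derivative_of_pow_eq_zero {K A : Type*} [Field K] [CharZero K]
    [Ring A] [Algebra K A] {x y : A} (hxy : Commute x y) {r : ℕ} (hy : y ^ r = 0) (p : K[X]) :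
    aeval (x + y) p =
      ∑ i ∈ range r, (i.factorial : K)⁻¹ • (aeval x (derivative^[i] p) * y ^ i) := by
  rw [aeval_add_eq_sum_hasseDeriv_of_pow_eq_zero hxy hy]
  refine sum_congr rfl fun i _ => ?_
  rw [← factorial_smul_hasseDeriv, LinearMap.smul_apply, map_nsmul, smul_mul_assoc,
    ← Nat.cast_smul_eq_nsmul K, smul_smul,
    inv_mul_cancel₀ (Nat.cast_ne_zero.2 i.factorial_ne_zero), one_smul]

end Polynomial

namespace Matrix

def upperShift (R : Type*) [Zero R] [One R] (r : ℕ) : Matrix (Fin r) (Fin r) R :=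
  of fun i j => if (i : ℕ) + 1 = j then 1 else 0

variable {R : Type*}

theorem upperShift_pow [Semiring R] (r k : ℕ) :
    upperShift R r ^ k = of fun i j : Fin r => if (i : ℕ) + k = j then 1 else 0 := by
  induction k with
  | zero =>
    ext i j
    simp [one_apply, Fin.ext_iff]
  | succ k ih =>
    ext i j
    rw [pow_succ, ih, mul_apply, of_apply]
    by_cases hl : (i : ℕ) + k < r
    · rw [sum_eq_single (⟨(i : ℕ) + k, hl⟩ : Fin r) (fun b _ hb => ?_) (by simp)]
      · simp [upperShift, add_assoc]
      · rw [of_apply, if_neg (fun hc => hb (Fin.ext hc.symm)), zero_mul]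
    · rw [if_neg (by omega)]
      exact sum_eq_zero fun b _ => by rw [of_apply, if_neg (by omega), zero_mul]

theorem upperShift_pow_self [Semiring R] (r : ℕ) : upperShift R r ^ r = 0 := by
  rw [upperShift_pow]
  ext i j
  simp only [of_apply, zero_apply, ite_eq_right_iff]
  omega

theorem pow_kronecker_one [CommSemiring R] {l n : Type*} [Fintype l] [DecidableEq l]
    [Fintype n] [DecidableEq n] (A : Matrix l l R) (k : ℕ) :
    (A ^ k) ⊗ₖ (1 : Matrix n n R) = (A ⊗ₖ 1) ^ k := by
  induction k with
  | zero => rw [pow_zero, pow_zero, one_kronecker_one]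
  | succ k ih => rw [pow_succ, pow_succ, ← ih, ← mul_kronecker_mul, mul_one]

end Matrix

theorem stmt_15_general (m r : ℕ) (D : Matrix (Fin m) (Fin m) ℚ)
    (B E N : Matrix (Fin r × Fin m) (Fin r × Fin m) ℚ)
    (hB : B = Matrix.of fun x y : Fin r × Fin m =>
      if x.1 = y.1 then D x.2 y.2
      else if (x.1 : ℕ) + 1 = (y.1 : ℕ) then (if x.2 = y.2 then 1 else 0) else 0)
    (hE : E = Matrix.of fun x y : Fin r × Fin m =>
      if x.1 = y.1 then D x.2 y.2 else 0)
    (hN : N = B - E) :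
    E * N = N * E ∧ N ^ r = 0 ∧
    ∀ h : Polynomial ℚ,
      Polynomial.aeval B h =
        ∑ i ∈ Finset.range r,
          ((i.factorial : ℚ)⁻¹) • (Polynomial.aeval E (Polynomial.derivative^[i] h) * N ^ i) := by
  have hE_kron : E = 1 ⊗ₖ D := by
    ext ⟨a, b⟩ ⟨c, d⟩
    by_cases hac : a = c <;> simp [hE, one_apply, hac]
  have hN_kron : N = upperShift ℚ r ⊗ₖ 1 := by
    ext ⟨a, b⟩ ⟨c, d⟩
    by_cases hac : a = c <;> simp [hN, hB, hE, upperShift, hac, one_apply, ← ite_and, and_comm]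
  have hEN : Commute E N := by
    rw [hE_kron, hN_kron, Commute, SemiconjBy, ← mul_kronecker_mul, ← mul_kronecker_mul,
      one_mul, mul_one, one_mul, mul_one]
  have hNr : N ^ r = 0 := by
    rw [hN_kron, ← pow_kronecker_one, upperShift_pow_self, zero_kronecker]
  refine ⟨hEN.eq, hNr, fun h => ?_⟩
  rw [show B = E + N by rw [hN, add_sub_cancel]]
  exact aeval_add_eq_sum_iterate_derivative_of_pow_eq_zero hEN hNr h

/-- Let `B` be the `rm × rm` block matrix with `D` on the diagonal blocks and
identity blocks on the superdiagonal, written `B = E + N` with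
`E = diag(D,…,D)` and `N` the nilpotent part. Then `EN = NE`, `N^r = 0`, and
for every polynomial `h`,
`h(B) = ∑_{i<r} h⁽ⁱ⁾(E) Nⁱ / i!` (Taylor expansion). -/
theorem stmt_15 (m r : ℕ) (hr : 1 ≤ r) (D : Matrix (Fin m) (Fin m) ℚ)
    (B E N : Matrix (Fin r × Fin m) (Fin r × Fin m) ℚ)
    (hB : B = Matrix.of fun x y : Fin r × Fin m =>
      if x.1 = y.1 then D x.2 y.2
      else if (x.1 : ℕ) + 1 = (y.1 : ℕ) then (if x.2 = y.2 then 1 else 0) else 0)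
    (hE : E = Matrix.of fun x y : Fin r × Fin m =>
      if x.1 = y.1 then D x.2 y.2 else 0)
    (hN : N = B - E) :
    E * N = N * E ∧ N ^ r = 0 ∧
    ∀ h : Polynomial ℚ,
      Polynomial.aeval B h =
        ∑ i ∈ Finset.range r,
          ((i.factorial : ℚ)⁻¹) • (Polynomial.aeval E (Polynomial.derivative^[i] h) * N ^ i) :=
  stmt_15_general m r D B E N hB hE hN
end

section
/- Let A ∈ M_n(ℤ) induce an ergodic endomorphism of 𝕋ⁿ (ergodic with respect to Haar measure), and let {O_k} be a sequence of periodic orbits of A that is uniformly distributed in the metric sense, i.e., there is C > 0 with d(O_k)ⁿ T(O_k) ≥ C for all k and T(O_k) → ∞. Then the periodic measures μ_k = T(O_k)^{−1} ∑_{x ∈ O_k} δ_x converge in the weak* topology to the Haar (Lebesgue) measure on 𝕋ⁿ. -/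
/-!
By von Neumann's mean ergodic theorem the Birkhoff averages `A_N g` converge to `∫ g` in `L²`,
hence in `L¹`. Along a periodic orbit the orbit average of `g` equals that of `A_N g`, so it
suffices to bound the orbit average of `ψ = |A_N g - ∫ g|`. In the sup metric the closed balls of
radius `d(O)/3` around the points of `O` are disjoint, so `T(O) (2 d(O) / 3)ⁿ ≤ 1` and the balls
shrink as `T(O) → ∞`; comparing `ψ` at each point with its mean over the ball bounds the orbit
average of `ψ` by `(3/2)ⁿ C⁻¹ ∫ ψ + o(1)`, i.e. weak* limits are dominated by a multiple of Haar
measure.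
-/

open MeasureTheory Filter Topology Finset Metric

namespace MeasureTheory

variable {α : Type*} [MeasurableSpace α] {μ : Measure α} {f : α → α}

theorem Lp.integral_abs_sub_le_dist [IsProbabilityMeasure μ] (F G : Lp ℝ 2 μ) :
    ∫ y, |F y - G y| ∂μ ≤ dist F G := by
  have hFG : MemLp (⇑F - ⇑G) 2 μ := (Lp.memLp F).sub (Lp.memLp G)
  calc ∫ y, |F y - G y| ∂μ = (eLpNorm (⇑F - ⇑G) 1 μ).toReal := by
        rw [eLpNorm_one_eq_lintegral_enorm]
        simpa [Real.norm_eq_abs] using integral_norm_eq_lintegral_enorm hFG.1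
    _ ≤ (eLpNorm (⇑F - ⇑G) 2 μ).toReal :=
        ENNReal.toReal_mono hFG.eLpNorm_ne_top
          (eLpNorm_le_eLpNorm_of_exponent_le (by norm_num) hFG.1)
    _ = dist F G := (Lp.dist_def F G).symm

variable {E : Type*} [NormedAddCommGroup E] {p : ENNReal}

theorem MeasurePreserving.coeFn_birkhoffAverage_compMeasurePreserving [NormedSpace ℝ E]
    (hf : MeasurePreserving f μ μ) (F : Lp E p μ) (N : ℕ) :
    ⇑(birkhoffAverage ℝ (Lp.compMeasurePreserving f hf) id N F) =ᵐ[μ]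
      birkhoffAverage ℝ f F N := by
  have hiter : ∀ k, ⇑((Lp.compMeasurePreserving f hf)^[k] F) =ᵐ[μ] F ∘ f^[k] := fun k => by
    rw [Lp.compMeasurePreserving_iterate]
    exact Lp.coeFn_compMeasurePreserving F _
  filter_upwards [Lp.coeFn_smul (N : ℝ)⁻¹ (∑ k ∈ range N, (Lp.compMeasurePreserving f hf)^[k] F),
    Lp.coeFn_fun_finsetSum (range N) fun k => (Lp.compMeasurePreserving f hf)^[k] F,
    ae_all_iff.2 hiter] with y hsmul hsum hk
  simp only [birkhoffAverage, birkhoffSum, id, hsmul, Pi.smul_apply, hsum, hk, Function.comp]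

theorem Ergodic.exists_ae_eq_const_of_compMeasurePreserving_eq [Nonempty E] (h : Ergodic f μ)
    {F : Lp E p μ} (hF : Lp.compMeasurePreserving f h.toMeasurePreserving F = F) :
    ∃ c, F =ᵐ[μ] fun _ => c :=
  h.ae_eq_const_of_ae_eq_comp_ae (Lp.aestronglyMeasurable F)
    ((Lp.coeFn_compMeasurePreserving F _).symm.trans (by rw [hF]))

theorem MeasurePreserving.integral_birkhoffAverage [NormedSpace ℝ E] [CompleteSpace E]
    (hf : MeasurePreserving f μ μ) {g : α → E} (hg : Integrable g μ) {N : ℕ} (hN : N ≠ 0) :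
    ∫ y, birkhoffAverage ℝ f g N y ∂μ = ∫ y, g y ∂μ := by
  have hcomp : ∀ k, ∫ y, g (f^[k] y) ∂μ = ∫ y, g y ∂μ := fun k => by
    rw [← integral_map (hf.iterate k).aemeasurable (by rw [(hf.iterate k).map_eq]; exact hg.1),
      (hf.iterate k).map_eq]
  simp only [birkhoffAverage, birkhoffSum]
  rw [integral_smul, integral_finsetSum (f := fun k y => g (f^[k] y)) _
    fun k _ => (hf.iterate k).integrable_comp_of_integrable hg]
  simp only [hcomp, sum_const, card_range, ← Nat.cast_smul_eq_nsmul ℝ, smul_smul,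
    inv_mul_cancel₀ (Nat.cast_ne_zero.2 hN : (N : ℝ) ≠ 0), one_smul]

theorem Ergodic.tendsto_integral_abs_birkhoffAverage_sub_integral [IsProbabilityMeasure μ]
    (h : Ergodic f μ) {g : α → ℝ} (hg : MemLp g 2 μ) :
    Tendsto (fun N => ∫ y, |birkhoffAverage ℝ f g N y - ∫ z, g z ∂μ| ∂μ) atTop (𝓝 0) := by
  have hf := h.toMeasurePreserving
  set U := (Lp.compMeasurePreservingₗᵢ ℝ f hf : Lp ℝ 2 μ →ₗᵢ[ℝ] Lp ℝ 2 μ).toContinuousLinearMap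
  obtain ⟨P, hPfix, hlim⟩ : ∃ P, U P = P ∧
      Tendsto (birkhoffAverage ℝ U id · (hg.toLp g)) atTop (𝓝 P) :=
    ⟨_, LinearMap.mem_eqLocus.1 (Submodule.coe_mem _),
      U.tendsto_birkhoffAverage_orthogonalProjection
        (LinearIsometry.norm_toContinuousLinearMap_le _) _⟩
  obtain ⟨c, hPc⟩ := h.exists_ae_eq_const_of_compMeasurePreserving_eq hPfix
  have hae : ∀ N, birkhoffAverage ℝ f g N =ᵐ[μ] ⇑(birkhoffAverage ℝ U id N (hg.toLp g)) :=
    fun N => (hf.quasiMeasurePreserving.birkhoffAverage_ae_eq_of_ae_eq ℝ hg.coeFn_toLp.symm N).trans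
      (hf.coeFn_birkhoffAverage_compMeasurePreserving _ N).symm
  have hL1 : Tendsto (fun N => ∫ y, |birkhoffAverage ℝ f g N y - c| ∂μ) atTop (𝓝 0) := by
    refine squeeze_zero (fun N => integral_nonneg fun _ => abs_nonneg _) (fun N => ?_)
      (tendsto_iff_dist_tendsto_zero.1 hlim)
    calc ∫ y, |birkhoffAverage ℝ f g N y - c| ∂μ
        = ∫ y, |birkhoffAverage ℝ U id N (hg.toLp g) y - P y| ∂μ :=
          integral_congr_ae <| by filter_upwards [hae N, hPc] with y h1 h2; rw [h1, h2]
      _ ≤ _ := Lp.integral_abs_sub_le_dist _ _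
  suffices hc : c = ∫ z, g z ∂μ by rwa [hc] at hL1
  have hle : |∫ z, g z ∂μ - c| ≤ 0 := ge_of_tendsto hL1 <| by
    filter_upwards [eventually_ne_atTop 0] with N hN
    have hint : Integrable (birkhoffAverage ℝ f g N) μ :=
      ((Lp.memLp _).ae_eq (hae N).symm).integrable one_le_two
    calc |∫ z, g z ∂μ - c| = |∫ y, (birkhoffAverage ℝ f g N y - c) ∂μ| := by
          rw [integral_sub hint (integrable_const c), hf.integral_birkhoffAverage
            (hg.integrable one_le_two) hN, integral_const, probReal_univ, one_smul]
      _ ≤ ∫ y, |birkhoffAverage ℝ f g N y - c| ∂μ := abs_integral_le_integral_abs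
  exact (sub_eq_zero.1 (abs_nonpos_iff.1 hle)).symm

end MeasureTheory

namespace Function

variable {α : Type*} {f : α → α} {x : α} {n : ℕ}

theorem iterate_injOn_Iio_of_minimal (hper : IsPeriodicPt f n x)
    (hmin : ∀ t, 0 < t → f^[t] x = x → n ≤ t) :
    (Set.Iio n).InjOn (f^[·] x) := by
  rcases Nat.eq_zero_or_pos n with rfl | hn
  · simp
  refine iterate_injOn_Iio_minimalPeriod.mono (Set.Iio_subset_Iio ?_)
  exact hmin _ (IsPeriodicPt.minimalPeriod_pos hn hper) (isPeriodicPt_minimalPeriod f x)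

namespace IsPeriodicPt

theorem birkhoffSum_iterate {G : Type*} [AddCommGroup G] (h : IsPeriodicPt f n x)
    (g : α → G) (m : ℕ) : birkhoffSum f g n (f^[m] x) = birkhoffSum f g n x := by
  induction m with
  | zero => rfl
  | succ m ih =>
    have hstep := birkhoffSum_apply_sub_birkhoffSum f g n (f^[m] x)
    rw [(h.apply_iterate m).eq, sub_self, sub_eq_zero] at hstep
    rw [iterate_succ_apply', hstep, ih]

theorem birkhoffSum_birkhoffAverage {E : Type*} [AddCommGroup E] [Module ℝ E]
    (h : IsPeriodicPt f n x) (g : α → E) {N : ℕ} (hN : N ≠ 0) :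
    birkhoffSum f (birkhoffAverage ℝ f g N) n x = birkhoffSum f g n x := by
  have hswap : ∀ j, ∑ i ∈ range n, g (f^[j] (f^[i] x)) = ∑ i ∈ range n, g (f^[i] x) :=
    fun j => by simpa only [birkhoffSum, ← iterate_add_apply, add_comm] using
      h.birkhoffSum_iterate g j
  simp only [birkhoffAverage, birkhoffSum, ← smul_sum]
  rw [sum_comm]
  simp only [hswap, sum_const, card_range, ← Nat.cast_smul_eq_nsmul ℝ, smul_smul,
    inv_mul_cancel₀ (Nat.cast_ne_zero.2 hN : (N : ℝ) ≠ 0), one_smul]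

theorem abs_birkhoffAverage_sub_le (h : IsPeriodicPt f n x) (hn : n ≠ 0) (g : α → ℝ) {N : ℕ}
    (hN : N ≠ 0) (c : ℝ) :
    |birkhoffAverage ℝ f g n x - c|
      ≤ birkhoffAverage ℝ f (fun y => |birkhoffAverage ℝ f g N y - c|) n x := by
  have hsub : birkhoffAverage ℝ f (birkhoffAverage ℝ f g N) n x - c
      = birkhoffAverage ℝ f (fun y => birkhoffAverage ℝ f g N y - c) n x := by
    have hn' : (n : ℝ) ≠ 0 := Nat.cast_ne_zero.2 hn
    simp only [birkhoffAverage, birkhoffSum, sum_sub_distrib, sum_const, card_range,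
      nsmul_eq_mul, smul_eq_mul]
    field_simp
  rw [birkhoffAverage, ← h.birkhoffSum_birkhoffAverage g hN, ← birkhoffAverage, hsub]
  simp only [birkhoffAverage, birkhoffSum, smul_eq_mul, abs_mul, abs_inv, Nat.abs_cast]
  gcongr
  exact abs_sum_le_sum_abs _ _

theorem finite_range_iterate (h : IsPeriodicPt f n x) (hn : 0 < n) :
    (Set.range fun m => f^[m] x).Finite :=
  ((Set.finite_lt_nat n).image (f^[·] x)).subset <| Set.range_subset_iff.2 fun m =>
    ⟨m % n, Nat.mod_lt m hn, h.iterate_mod_apply m⟩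

end IsPeriodicPt

end Function

section Separation

open Function

variable {ι X : Type*} [MetricSpace X]

noncomputable def separation (q : ι → X) : ℝ :=
  sInf {r | ∃ i j, q i ≠ q j ∧ r = dist (q i) (q j)}

theorem separation_le_dist {q : ι → X} {i j : ι} (h : q i ≠ q j) :
    separation q ≤ dist (q i) (q j) :=
  csInf_le ⟨0, by rintro _ ⟨_, _, _, rfl⟩; exact dist_nonneg⟩ ⟨i, j, h, rfl⟩

theorem separation_pos {q : ι → X} (hq : (Set.range q).Finite) {i j : ι} (h : q i ≠ q j) :
    0 < separation q := by
  set S := {r | ∃ i j, q i ≠ q j ∧ r = dist (q i) (q j)}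
  have hfin : S.Finite := (hq.image2 dist hq).subset <| by
    rintro _ ⟨i, j, -, rfl⟩
    exact ⟨_, ⟨i, rfl⟩, _, ⟨j, rfl⟩, rfl⟩
  obtain ⟨i', j', hne, heq⟩ : sInf S ∈ S := Set.Nonempty.csInf_mem ⟨_, i, j, h, rfl⟩ hfin
  rw [separation, heq]
  exact dist_pos.2 hne

theorem separation_iterate_le_dist {f : X → X} {x : X} {n i j : ℕ} (hper : IsPeriodicPt f n x)
    (hmin : ∀ t, 0 < t → f^[t] x = x → n ≤ t) (hi : i < n) (hj : j < n) (hij : i ≠ j) :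
    separation (f^[·] x) ≤ dist (f^[i] x) (f^[j] x) :=
  separation_le_dist ((iterate_injOn_Iio_of_minimal hper hmin).ne hi hj hij)

theorem separation_iterate_pos {f : X → X} {x : X} {n : ℕ} (hper : IsPeriodicPt f n x)
    (hmin : ∀ t, 0 < t → f^[t] x = x → n ≤ t) (hn : 2 ≤ n) : 0 < separation (f^[·] x) :=
  separation_pos (hper.finite_range_iterate (by omega))
    ((iterate_injOn_Iio_of_minimal hper hmin).ne (show 0 < n by omega)
      (show 1 < n by omega) zero_ne_one)

end Separation

theorem sum_mul_measureReal_le_integral_add {X ι : Type*} [MeasurableSpace X] {μ : Measure X}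
    [IsFiniteMeasure μ] {φ : X → ℝ} (hφ : Integrable φ μ) (hφ0 : 0 ≤ φ) {s : Finset ι}
    {t : ι → Set X} (ht : ∀ i ∈ s, MeasurableSet (t i)) (hdisj : (s : Set ι).PairwiseDisjoint t)
    {a : ι → ℝ} {η : ℝ} (ha : ∀ i ∈ s, ∀ y ∈ t i, a i ≤ φ y + η) :
    ∑ i ∈ s, a i * μ.real (t i) ≤ ∫ y, φ y ∂μ + η * ∑ i ∈ s, μ.real (t i) := by
  have hlocal : ∀ i ∈ s, a i * μ.real (t i) ≤ ∫ y in t i, φ y ∂μ + η * μ.real (t i) := by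
    intro i hi
    calc a i * μ.real (t i) = ∫ _ in t i, a i ∂μ := by
          rw [setIntegral_const, smul_eq_mul, mul_comm]
      _ ≤ ∫ y in t i, (φ y + η) ∂μ :=
          setIntegral_mono_on (integrableOn_const (measure_ne_top _ _))
            (hφ.integrableOn.add (integrableOn_const (measure_ne_top _ _))) (ht i hi) (ha i hi)
      _ = ∫ y in t i, φ y ∂μ + η * μ.real (t i) := by
          rw [integral_add hφ.integrableOn (integrableOn_const (measure_ne_top _ _)),
            setIntegral_const, smul_eq_mul, mul_comm]
  have hunion : ∑ i ∈ s, ∫ y in t i, φ y ∂μ ≤ ∫ y, φ y ∂μ := by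
    rw [← integral_biUnion_finset s ht hdisj fun i _ => hφ.integrableOn]
    exact setIntegral_le_integral hφ (ae_of_all _ hφ0)
  calc ∑ i ∈ s, a i * μ.real (t i)
      ≤ ∑ i ∈ s, (∫ y in t i, φ y ∂μ + η * μ.real (t i)) := sum_le_sum hlocal
    _ ≤ ∫ y, φ y ∂μ + η * ∑ i ∈ s, μ.real (t i) := by
        rw [sum_add_distrib, mul_sum]
        gcongr

local notation "𝕋" => AddCircle (1 : ℝ)

instance : IsProbabilityMeasure (volume : Measure 𝕋) := ⟨by simp⟩

theorem torus_dist_le_half {n : ℕ} (y z : Fin n → 𝕋) : dist y z ≤ 1 / 2 :=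
  (dist_pi_le_iff (by norm_num)).2 fun i => by
    simpa [dist_eq_norm] using
      AddCircle.norm_le_half_period (p := 1) (x := y i - z i) one_ne_zero

theorem torus_measureReal_closedBall {n : ℕ} (y : Fin n → 𝕋) {r : ℝ} (hr0 : 0 ≤ r)
    (hr : 2 * r ≤ 1) : volume.real (closedBall y r) = (2 * r) ^ n := by
  rw [measureReal_def, closedBall_pi y hr0, volume_pi_pi]
  simp [AddCircle.volume_closedBall, min_eq_right hr, hr0]

theorem torus_card_mul_pow_le_one {n : ℕ} {ι : Type*} {s : Finset ι} {q : ι → Fin n → 𝕋}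
    {r : ℝ} (hr0 : 0 ≤ r) (hr : 2 * r ≤ 1)
    (hdisj : (s : Set ι).PairwiseDisjoint fun i => closedBall (q i) r) :
    #s * (2 * r) ^ n ≤ 1 := by
  have h := measureReal_biUnion_finset (μ := volume) hdisj fun i _ => measurableSet_closedBall
  simp only [torus_measureReal_closedBall _ hr0 hr, sum_const, nsmul_eq_mul] at h
  exact h ▸ measureReal_le_one

theorem torus_average_abs_le {n T : ℕ} {ψ : (Fin n → 𝕋) → ℝ} (hψ : Continuous ψ)
    {q : ℕ → Fin n → 𝕋} {r η : ℝ} (hr0 : 0 < r) (hr : 2 * r ≤ 1) (hT : 0 < T)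
    (hdisj : (range T : Set ℕ).PairwiseDisjoint fun i => closedBall (q i) r)
    (hosc : ∀ i < T, ∀ y ∈ closedBall (q i) r, |ψ (q i)| ≤ |ψ y| + η) :
    (T : ℝ)⁻¹ * ∑ i ∈ range T, |ψ (q i)| ≤ (∫ y, |ψ y|) / (T * (2 * r) ^ n) + η := by
  have hsum : (∑ i ∈ range T, |ψ (q i)|) * (2 * r) ^ n
      ≤ (∫ y, |ψ y|) + η * (T * (2 * r) ^ n) := by
    have h := sum_mul_measureReal_le_integral_add (μ := volume) (a := fun i => |ψ (q i)|)
      (hψ.abs.integrable_of_hasCompactSupport (.of_compactSpace _)) (fun _ => abs_nonneg _)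
      (fun _ _ => measurableSet_closedBall) hdisj fun i hi => hosc i (mem_range.1 hi)
    simpa only [torus_measureReal_closedBall _ hr0.le hr, ← sum_mul, sum_const, card_range,
      nsmul_eq_mul] using h
  have hv : (0 : ℝ) < T * (2 * r) ^ n := by positivity
  calc (T : ℝ)⁻¹ * ∑ i ∈ range T, |ψ (q i)|
      = (∑ i ∈ range T, |ψ (q i)|) * (2 * r) ^ n / (T * (2 * r) ^ n) := by
        field_simp
    _ ≤ ((∫ y, |ψ y|) + η * (T * (2 * r) ^ n)) / (T * (2 * r) ^ n) := by gcongr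
    _ = (∫ y, |ψ y|) / (T * (2 * r) ^ n) + η := by field_simp

theorem exists_average_abs_le_of_separated {n : ℕ} {ψ : (Fin n → 𝕋) → ℝ} (hψ : Continuous ψ)
    {C : ℝ} (hC : 0 < C) {η : ℝ} (hη : 0 < η) :
    ∃ M : ℕ, ∀ (T : ℕ) (q : ℕ → Fin n → 𝕋) (d : ℝ), M ≤ T → 0 < d →
      (∀ i < T, ∀ j < T, i ≠ j → d ≤ dist (q i) (q j)) → C ≤ d ^ n * T →
      (T : ℝ)⁻¹ * ∑ i ∈ range T, |ψ (q i)| ≤ (3 / 2) ^ n / C * (∫ y, |ψ y|) + η := by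
  obtain ⟨δ, hδ, hψδ⟩ := Metric.uniformContinuous_iff.1
    (CompactSpace.uniformContinuous_of_continuous hψ) η hη
  obtain ⟨m, hm⟩ := exists_nat_gt ((2 * δ)⁻¹ ^ n)
  refine ⟨max 2 m, fun T q d hT hd hsep hUD => ?_⟩
  have hd_half : d ≤ 1 / 2 :=
    (hsep 0 (by omega) 1 (by omega) zero_ne_one).trans (torus_dist_le_half _ _)
  set r := d / 3 with hr
  have hr0 : 0 < r := by positivity
  have hr1 : 2 * r ≤ 1 := by linarith
  have hdisj : (range T : Set ℕ).PairwiseDisjoint fun i => closedBall (q i) r :=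
    fun i hi j hj hij => closedBall_disjoint_closedBall <| by
      linarith [hsep i (mem_range.1 hi) j (mem_range.1 hj) hij]
  have hrδ : r < δ := by
    by_contra! hδr
    have hT' : (2 * δ)⁻¹ ^ n < T := hm.trans_le (by exact_mod_cast le_of_max_le_right hT)
    rw [inv_pow, inv_lt_iff_one_lt_mul₀ (by positivity)] at hT'
    have hpack : (T : ℝ) * (2 * r) ^ n ≤ 1 := by
      simpa using torus_card_mul_pow_le_one hr0.le hr1 hdisj
    have : (T : ℝ) * (2 * δ) ^ n ≤ T * (2 * r) ^ n := by gcongr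
    linarith
  have hTv : (2 / 3) ^ n * C ≤ T * (2 * r) ^ n := by
    calc (2 / 3) ^ n * C ≤ (2 / 3) ^ n * (d ^ n * T) := by gcongr
      _ = T * (2 * r) ^ n := by rw [hr, show 2 * (d / 3) = 2 / 3 * d by ring, mul_pow]; ring
  have hosc : ∀ i < T, ∀ y ∈ closedBall (q i) r, |ψ (q i)| ≤ |ψ y| + η := fun i _ y hy => by
    have := hψδ ((mem_closedBall'.1 hy).trans_lt hrδ)
    rw [Real.dist_eq] at this
    linarith [abs_sub_abs_le_abs_sub (ψ (q i)) (ψ y)]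
  calc (T : ℝ)⁻¹ * ∑ i ∈ range T, |ψ (q i)|
      ≤ (∫ y, |ψ y|) / (T * (2 * r) ^ n) + η :=
        torus_average_abs_le hψ hr0 hr1 (by omega) hdisj hosc
    _ ≤ (∫ y, |ψ y|) / ((2 / 3) ^ n * C) + η := by gcongr
    _ = (3 / 2) ^ n / C * (∫ y, |ψ y|) + η := by
        rw [div_eq_mul_inv _ ((2 / 3) ^ n * C), mul_inv, ← inv_pow, inv_div]
        ring

theorem stmt_17_general (n : ℕ) (A : Matrix (Fin n) (Fin n) ℤ)
    (f : (Fin n → AddCircle (1 : ℝ)) → (Fin n → AddCircle (1 : ℝ)))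
    (hf : f = fun x i => ∑ j : Fin n, A i j • x j)
    (herg : Ergodic f volume)
    (x : ℕ → (Fin n → AddCircle (1 : ℝ))) (T : ℕ → ℕ)
    (hper : ∀ k, f^[T k] (x k) = x k)
    (hmin : ∀ k, ∀ t : ℕ, 0 < t → f^[t] (x k) = x k → T k ≤ t)
    (d : ℕ → ℝ)
    (hd : ∀ k, d k = sInf {r : ℝ | ∃ i j : ℕ, f^[i] (x k) ≠ f^[j] (x k) ∧
      r = dist (f^[i] (x k)) (f^[j] (x k))})
    (C : ℝ) (hC : 0 < C)
    (hUD : ∀ k, C ≤ (d k) ^ n * (T k))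
    (hTinf : Tendsto T atTop atTop) :
    ∀ g : C((Fin n → AddCircle (1 : ℝ)), ℝ),
      Tendsto (fun k => (∑ i ∈ Finset.range (T k), g (f^[i] (x k))) / (T k))
        atTop (nhds (∫ y, g y ∂volume)) := by
  intro g
  have hfc : Continuous f := by rw [hf]; fun_prop
  set c := ∫ y, g y
  have havg : (fun k => (∑ i ∈ range (T k), g (f^[i] (x k))) / (T k))
      = fun k => birkhoffAverage ℝ f g (T k) (x k) := by
    ext k
    simp only [birkhoffAverage, birkhoffSum, smul_eq_mul, div_eq_inv_mul]
  rw [havg, Metric.tendsto_nhds]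
  intro ε hε
  obtain ⟨N, hNε, hN⟩ : ∃ N, (3 / 2) ^ n / C * (∫ y, |birkhoffAverage ℝ f g N y - c|) < ε / 2
      ∧ N ≠ 0 :=
    ((((herg.tendsto_integral_abs_birkhoffAverage_sub_integral (g.memLp volume ℝ)).const_mul
      ((3 / 2) ^ n / C)).eventually (gt_mem_nhds (by simpa using half_pos hε))).and
        (eventually_ne_atTop 0)).exists
  have hψ : Continuous fun y => birkhoffAverage ℝ f g N y - c := by
    simp only [birkhoffAverage, birkhoffSum]
    fun_prop
  obtain ⟨M, hM⟩ := exists_average_abs_le_of_separated hψ hC (half_pos hε)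
  filter_upwards [hTinf.eventually_ge_atTop (max M 2)] with k hk
  have hdk : d k = separation (f^[·] (x k)) := hd k
  calc dist (birkhoffAverage ℝ f g (T k) (x k)) c
      ≤ birkhoffAverage ℝ f (fun y => |birkhoffAverage ℝ f g N y - c|) (T k) (x k) :=
        (Function.IsPeriodicPt.abs_birkhoffAverage_sub_le (hper k) (by omega) g hN c)
    _ ≤ (3 / 2) ^ n / C * (∫ y, |birkhoffAverage ℝ f g N y - c|) + ε / 2 :=
        hM (T k) _ (d k) (le_of_max_le_left hk)
          (hdk ▸ separation_iterate_pos (hper k) (hmin k) (le_of_max_le_right hk))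
          (fun i hi j hj hij => hdk ▸ separation_iterate_le_dist (hper k) (hmin k) hi hj hij)
          (hUD k)
    _ < ε := by linarith

/-- If `A ∈ M_n(ℤ)` induces an ergodic endomorphism of the torus
`𝕋ⁿ = (ℝ/ℤ)ⁿ` and `(xₖ)` is a sequence of periodic points with minimal
periods `Tₖ → ∞` whose orbits `Oₖ` are uniformly distributed in the metric
sense (`d(Oₖ)ⁿ Tₖ ≥ C > 0`), then the periodic measures (uniform measures on
the orbits) converge weak* to the Haar (Lebesgue) probability measure, i.e.
the orbit averages of every continuous function converge to its integral. -/
theorem stmt_17 (n : ℕ) (hn : 0 < n) (A : Matrix (Fin n) (Fin n) ℤ)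
    (hdet : A.det ≠ 0)
    (f : (Fin n → AddCircle (1 : ℝ)) → (Fin n → AddCircle (1 : ℝ)))
    (hf : f = fun x i => ∑ j : Fin n, A i j • x j)
    (herg : Ergodic f volume)
    (x : ℕ → (Fin n → AddCircle (1 : ℝ))) (T : ℕ → ℕ)
    (hTpos : ∀ k, 0 < (T k))
    (hper : ∀ k, f^[T k] (x k) = x k)
    (hmin : ∀ k, ∀ t : ℕ, 0 < t → f^[t] (x k) = x k → T k ≤ t)
    (d : ℕ → ℝ)
    (hd : ∀ k, d k = sInf {r : ℝ | ∃ i j : ℕ, f^[i] (x k) ≠ f^[j] (x k) ∧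
      r = dist (f^[i] (x k)) (f^[j] (x k))})
    (C : ℝ) (hC : 0 < C)
    (hUD : ∀ k, C ≤ (d k) ^ n * (T k))
    (hTinf : Tendsto T atTop atTop) :
    ∀ g : C((Fin n → AddCircle (1 : ℝ)), ℝ),
      Tendsto (fun k => (∑ i ∈ Finset.range (T k), g (f^[i] (x k))) / (T k))
        atTop (nhds (∫ y, g y ∂volume)) :=
  stmt_17_general n A f hf herg x T hper hmin d hd C hC hUD hTinf
end

section
/- Let A ∈ M_n(ℤ) induce an endomorphism of 𝕋ⁿ that is not ergodic with respect to Haar measure, so that the characteristic polynomial of A has a root ζ which is a primitive m-th root of unity. Then no sequence of periodic measures of A (uniform measures on periodic orbits) converges in the weak* topology to the Haar measure on 𝕋ⁿ. -/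
/-!
If `ζ` is a primitive `m`-th root of unity and a root of `charpoly A`, then `det (A ^ m - 1) = 0`,
so some nonzero integer covector `w` satisfies `w A ^ m = w`. The projection `y ↦ ∑ wⱼ yⱼ` of the
torus onto the circle is then `A ^ m`-invariant: along any orbit its values satisfy `t_{mj} = t₀`.
Equidistribution would force every Weyl average `(1/T) ∑ e(d tᵢ)`, `d ≠ 0`, to vanish in the limit.
Averaging the Fejér-type kernel `|∑_{0 ≤ d ≤ m} e(d (tᵢ - t₀))|²` gives a contradiction: its
average tends to `m + 1` by the vanishing Weyl sums, but the kernel equals `(m + 1)²` at the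
indices `i ≡ 0 mod m`, which make up at least a `1/m` fraction of every orbit segment.
-/

open MeasureTheory Filter Finset Matrix

theorem exists_vecMul_pow_eq_self_of_isRoot_charpoly {ι K : Type*} [Fintype ι] [DecidableEq ι]
    [Field K] [CharZero K] (A : Matrix ι ι ℤ) {ζ : K} {m : ℕ} (hζ : ζ ^ m = 1)
    (hroot : (A.charpoly.map (Int.castRingHom K)).IsRoot ζ) :
    ∃ w : ι → ℤ, w ≠ 0 ∧ w ᵥ* A ^ m = w := by
  have hspec : ζ ∈ spectrum K (A.map (Int.castRingHom K)) :=
    mem_spectrum_of_isRoot_charpoly (by rwa [charpoly_map])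
  have hone : (1 : K) ∈ spectrum K ((A ^ m).map (Int.castRingHom K)) := by
    rw [Matrix.map_pow]
    simpa [hζ] using spectrum.pow_mem_pow _ m hspec
  have hdet : (1 - A ^ m).det = 0 := by
    rw [mem_spectrum_iff_isRoot_charpoly, charpoly_map, Polynomial.IsRoot, Polynomial.eval_one_map,
      eval_charpoly, map_one] at hone
    exact (Int.cast_eq_zero (α := K)).mp hone
  obtain ⟨w, hw0, hw⟩ := exists_vecMul_eq_zero_iff.mpr hdet
  exact ⟨w, hw0, by rwa [vecMul_sub, vecMul_one, sub_eq_zero, eq_comm] at hw⟩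

theorem vecMul_pow_eq_self {ι R : Type*} [Fintype ι] [DecidableEq ι] [Semiring R]
    {B : Matrix ι ι R} {v : ι → R} (h : v ᵥ* B = v) (j : ℕ) : v ᵥ* B ^ j = v := by
  induction j with
  | zero => simp
  | succ j ih => rw [pow_succ, ← vecMul_vecMul, ih, h]

section IntDot

variable {ι M : Type*} [Fintype ι] [AddCommGroup M]

def intDot (c : ι → ℤ) : (ι → M) →+ M where
  toFun x := ∑ j, c j • x j
  map_zero' := by simp
  map_add' x y := by simp [smul_add, sum_add_distrib]

theorem intDot_apply (c : ι → ℤ) (x : ι → M) : intDot c x = ∑ j, c j • x j := rfl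

theorem intDot_single [DecidableEq ι] (c : ι → ℤ) (j : ι) (t : M) :
    intDot c (Pi.single j t) = c j • t := by
  simp [intDot_apply, Pi.single_apply]

theorem intDot_comp_matrix (A : Matrix ι ι ℤ) (c : ι → ℤ) (x : ι → M) :
    intDot c (fun i => ∑ j, A i j • x j) = intDot (c ᵥ* A) x := by
  simp only [intDot_apply, smul_sum, smul_smul, vecMul, dotProduct, sum_smul]
  exact sum_comm

theorem intDot_iterate_matrix [DecidableEq ι] (A : Matrix ι ι ℤ) (c : ι → ℤ) (x : ι → M)
    (k : ℕ) : intDot c ((fun x i => ∑ j, A i j • x j)^[k] x) = intDot (c ᵥ* A ^ k) x := by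
  induction k generalizing c with
  | zero => simp
  | succ k ih => rw [Function.iterate_succ_apply', intDot_comp_matrix, ih, vecMul_vecMul, pow_succ']

theorem continuous_intDot [TopologicalSpace M] [IsTopologicalAddGroup M] (c : ι → ℤ) :
    Continuous (intDot c : (ι → M) → M) := by
  show Continuous fun x : ι → M => ∑ j, c j • x j
  fun_prop

end IntDot

theorem tendsto_average_of_forall_real {X ι : Type*} [TopologicalSpace X] [CompactSpace X]
    [MeasurableSpace X] [OpensMeasurableSpace X] {μ : Measure X} [IsFiniteMeasure μ]
    {l : Filter ι} {L : ι → ℕ} {y : ι → ℕ → X}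
    (h : ∀ g : C(X, ℝ), Tendsto (fun k => (∑ i ∈ range (L k), g (y k i)) / L k) l
      (nhds (∫ x, g x ∂μ)))
    (g : C(X, ℂ)) :
    Tendsto (fun k => (∑ i ∈ range (L k), g (y k i)) / L k) l (nhds (∫ x, g x ∂μ)) := by
  have hre := h ⟨fun x => (g x).re, by fun_prop⟩
  have him := h ⟨fun x => (g x).im, by fun_prop⟩
  have hg : Integrable g μ := (BoundedContinuousFunction.mkOfCompact g).integrable μ
  rw [← integral_re_add_im hg]
  refine (((Complex.continuous_ofReal.tendsto _).comp hre).add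
    (((Complex.continuous_ofReal.tendsto _).comp him).mul_const Complex.I)).congr fun k => ?_
  apply Complex.ext <;> simp [Complex.re_sum, Complex.im_sum]

theorem mul_le_mul_sum_range_of_apply_mul_eq {a : ℕ → ℝ} (ha : ∀ i, 0 ≤ a i) {m : ℕ} (hm : 0 < m)
    {c : ℝ} (hc : ∀ j, a (m * j) = c) (L : ℕ) : L * c ≤ m * ∑ i ∈ range L, a i := by
  induction L using Nat.strong_induction_on generalizing a with
  | _ L ih =>
  rcases le_or_gt L m with hLm | hmL
  · rcases L.eq_zero_or_pos with rfl | hL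
    · simp
    · have hc0 : 0 ≤ c := hc 0 ▸ ha _
      calc (L : ℝ) * c ≤ m * c := by gcongr
        _ = m * a 0 := by rw [← hc 0, mul_zero]
        _ ≤ m * ∑ i ∈ range L, a i := by
          gcongr; exact single_le_sum (fun i _ => ha i) (mem_range.2 hL)
  · obtain ⟨r, rfl⟩ := Nat.exists_eq_add_of_le hmL.le
    have hhead := ih m hmL ha hc
    have htail := ih r (by omega) (a := fun i => a (m + i)) (fun i => ha _)
      (fun j => by rw [← hc (j + 1), mul_add_one, add_comm])
    rw [sum_range_add]
    push_cast
    linarith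

section AddCircle

variable {T : ℝ}

theorem fourier_apply_sub (e : ℤ) (x y : AddCircle T) :
    fourier e (x - y) = fourier e x * (starRingEnd ℂ) (fourier e y) := by
  rw [sub_eq_add_neg, ← fourier_neg, fourier_apply, fourier_apply, fourier_apply, smul_add,
    smul_neg, ← neg_smul, AddCircle.toCircle_add, Circle.coe_mul]

theorem normSq_sum_range_fourier (K : ℕ) (t : AddCircle T) :
    (Complex.normSq (∑ d ∈ range K, fourier (d : ℤ) t) : ℂ) =
      ∑ d ∈ range K, ∑ d' ∈ range K, fourier ((d : ℤ) - d') t := by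
  rw [← Complex.mul_conj, map_sum, sum_mul_sum]
  refine sum_congr rfl fun d _ => sum_congr rfl fun d' _ => ?_
  rw [sub_eq_add_neg, fourier_add, fourier_neg]

theorem integral_fourier_intDot {ι : Type*} [Fintype ι] [Fact (0 < T)] {e : ℤ} (he : e ≠ 0)
    {c : ι → ℤ} (hc : c ≠ 0) : ∫ y : ι → AddCircle T, fourier e (intDot c y) = 0 := by
  classical
  obtain ⟨j, hj⟩ := Function.ne_iff.mp hc
  -- translating the `j`-th coordinate by `T / (2 e cⱼ)` negates the integrand
  refine integral_eq_zero_of_add_right_eq_neg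
    (g := Pi.single j ((T / 2 / (e * c j : ℤ) : ℝ) : AddCircle T)) fun y => ?_
  have hhalf := fourier_add_half_inv_index (mul_ne_zero he hj) (Fact.out : 0 < T) 0
  rw [zero_add, fourier_eval_zero] at hhalf
  rw [map_add, intDot_single, fourier_apply, smul_add, smul_smul, AddCircle.toCircle_add,
    Circle.coe_mul, ← fourier_apply, ← fourier_apply, hhalf, mul_neg_one]

theorem tendsto_fourier_average_sub {L : ℕ → ℕ} (hL : ∀ k, 0 < L k) {p : ℕ → ℕ → AddCircle T}
    (hweyl : ∀ e : ℤ, e ≠ 0 →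
      Tendsto (fun k => (∑ i ∈ range (L k), fourier e (p k i)) / L k) atTop (nhds 0))
    (b : ℕ → AddCircle T) (e : ℤ) :
    Tendsto (fun k => (∑ i ∈ range (L k), fourier e (p k i - b k)) / L k) atTop
      (nhds (if e = 0 then 1 else 0)) := by
  split_ifs with he
  · refine tendsto_const_nhds.congr fun k => ?_
    have : (L k : ℂ) ≠ 0 := by exact_mod_cast (hL k).ne'
    simp [he, this]
  · have h := hweyl e he
    rw [tendsto_zero_iff_norm_tendsto_zero] at h ⊢
    refine h.congr fun k => ?_
    simp_rw [fourier_apply_sub, ← sum_mul, mul_div_right_comm]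
    rw [norm_mul, RCLike.norm_conj, fourier_apply, Circle.norm_coe, mul_one]

theorem not_forall_tendsto_fourier_average_of_apply_mul_eq {m : ℕ} (hm : 0 < m) {L : ℕ → ℕ}
    (hL : ∀ k, 0 < L k) {p : ℕ → ℕ → AddCircle T} (hp : ∀ k j, p k (m * j) = p k 0) :
    ¬ ∀ e : ℤ, e ≠ 0 →
      Tendsto (fun k => (∑ i ∈ range (L k), fourier e (p k i)) / L k) atTop (nhds 0) := by
  intro hweyl
  set K := m + 1
  set Q : ℕ → ℝ := fun k =>
    (∑ i ∈ range (L k), Complex.normSq (∑ d ∈ range K, fourier (d : ℤ) (p k i - p k 0))) / L k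
  have hQ_lower : ∀ k, (K : ℝ) ^ 2 ≤ m * Q k := fun k => by
    have hpeak : ∀ j, Complex.normSq (∑ d ∈ range K, fourier (d : ℤ) (p k (m * j) - p k 0)) =
        (K : ℝ) ^ 2 := fun j => by simp [hp, sq]
    have hsum := mul_le_mul_sum_range_of_apply_mul_eq
      (a := fun i => Complex.normSq (∑ d ∈ range K, fourier (d : ℤ) (p k i - p k 0)))
      (fun i => Complex.normSq_nonneg _) hm hpeak (L k)
    have hLk : (0 : ℝ) < L k := by exact_mod_cast hL k
    rw [mul_div_assoc', le_div_iff₀ hLk]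
    linarith
  have hQ_lim : Tendsto Q atTop (nhds K) := by
    rw [← tendsto_ofReal_iff]
    have := tendsto_finsetSum (range K) fun d _ => tendsto_finsetSum (range K) fun d' _ =>
      tendsto_fourier_average_sub hL hweyl (fun k => p k 0) ((d : ℤ) - d')
    simp only [sub_eq_zero, Nat.cast_inj, sum_ite_eq, sum_ite_mem, inter_self, sum_const,
      card_range, nsmul_one] at this
    refine this.congr fun k => ?_
    push_cast [Q]
    simp_rw [normSq_sum_range_fourier, sum_div]
    exact (sum_comm.trans (sum_congr rfl fun _ _ => sum_comm)).symm
  have hK := ge_of_tendsto' (hQ_lim.const_mul (m : ℝ)) hQ_lower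
  push_cast [K] at hK
  nlinarith

end AddCircle

theorem stmt_19_general (n : ℕ) (A : Matrix (Fin n) (Fin n) ℤ)
    (f : (Fin n → AddCircle (1 : ℝ)) → (Fin n → AddCircle (1 : ℝ)))
    (hf : f = fun x i => ∑ j : Fin n, A i j • x j)
    (ζ : ℂ) (m : ℕ) (hm : 0 < m) (hζ : IsPrimitiveRoot ζ m)
    (hroot : (A.charpoly.map (Int.castRingHom ℂ)).IsRoot ζ) :
    ∀ (x : ℕ → (Fin n → AddCircle (1 : ℝ))) (T : ℕ → ℕ),
      (∀ k, 0 < T k) → (∀ k, f^[T k] (x k) = x k) →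
      ¬ (∀ g : C((Fin n → AddCircle (1 : ℝ)), ℝ),
          Tendsto (fun k => (∑ i ∈ Finset.range (T k), g (f^[i] (x k))) / (T k))
            atTop (nhds (∫ y, g y ∂volume))) := by
  intro x T hT _ H
  obtain ⟨w, hw0, hwA⟩ := exists_vecMul_pow_eq_self_of_isRoot_charpoly A hζ.pow_eq_one hroot
  refine not_forall_tendsto_fourier_average_of_apply_mul_eq hm hT
    (p := fun k i => intDot w (f^[i] (x k))) (fun k j => ?_) fun e he => ?_
  · simp only [hf, intDot_iterate_matrix, pow_mul, vecMul_pow_eq_self hwA, pow_zero,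
      vecMul_one]
  · have := tendsto_average_of_forall_real H ((fourier e).comp ⟨intDot w, continuous_intDot w⟩)
    simpa only [ContinuousMap.comp_apply, ContinuousMap.coe_mk,
      integral_fourier_intDot he hw0] using this

/-- If `A ∈ M_n(ℤ)` (with `det A ≠ 0`) induces a non-ergodic endomorphism of
the torus `𝕋ⁿ = (ℝ/ℤ)ⁿ`, so that its characteristic polynomial has a root `ζ`
which is a primitive `m`-th root of unity, then no sequence of periodic
measures (uniform measures on periodic orbits) converges weak* to the Haar
measure: for every sequence of periodic points, the orbit averages fail to
converge to the space average for some continuous function. -/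
theorem stmt_19 (n : ℕ) (hn : 0 < n) (A : Matrix (Fin n) (Fin n) ℤ)
    (hdet : A.det ≠ 0)
    (f : (Fin n → AddCircle (1 : ℝ)) → (Fin n → AddCircle (1 : ℝ)))
    (hf : f = fun x i => ∑ j : Fin n, A i j • x j)
    (hnerg : ¬ Ergodic f volume)
    (ζ : ℂ) (m : ℕ) (hm : 0 < m) (hζ : IsPrimitiveRoot ζ m)
    (hroot : (A.charpoly.map (Int.castRingHom ℂ)).IsRoot ζ) :
    ∀ (x : ℕ → (Fin n → AddCircle (1 : ℝ))) (T : ℕ → ℕ),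
      (∀ k, 0 < T k) → (∀ k, f^[T k] (x k) = x k) →
      ¬ (∀ g : C((Fin n → AddCircle (1 : ℝ)), ℝ),
          Tendsto (fun k => (∑ i ∈ Finset.range (T k), g (f^[i] (x k))) / (T k))
            atTop (nhds (∫ y, g y ∂volume))) :=
  stmt_19_general n A f hf ζ m hm hζ hroot
end
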